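/- arXiv:2410.01093 — 3 statements merged into one kernel-verified Lean document; each statement's English description precedes it below -/
import Mathlib

section
/- Under Assumption 1, for every M > 0 there exists a constant c'_M > 0, depending only on M, K₁, and K₂, such that for every ξ ∈ [−M, M], every minimizer σ* ∈ [0, ∞) of the function σ ↦ sup_{γ ≥ 0} L(σ, ξ, γ) satisfies σ* ≥ c'_M. -/
open MeasureTheory ProbabilityTheory Real Set
open scoped BigOperators ENNReal NNReal

noncomputable section
/-- The logistic link `ρ(t) = log(1 + eᵗ)`. -/
def rho (t : ℝ) : ℝ := Real.log (1 + Real.exp t)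

/-- Its derivative `ρ'(t) = eᵗ/(1 + eᵗ)`. -/
def rho' (t : ℝ) : ℝ := Real.exp t / (1 + Real.exp t)

/-- The standard Gaussian measure on `ℝ`. -/
def stdGauss : Measure ℝ := gaussianReal 0 1

/-- `q(z) = E_G[ρ'((α_c/√α₂)·R·z + √(1 − α_c²/α₂)·R·G)]`, the conditional probability that
`Y = 1` given `Z₁ = z`. -/
def qfun (αc α₂ R z : ℝ) : ℝ :=
  ∫ g, rho' ((αc / Real.sqrt α₂) * R * z + Real.sqrt (1 - αc ^ 2 / α₂) * R * g) ∂stdGauss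

/-- Expectation of `F(Z₁, Z₂, Y)` under the joint law of `(Z₁, Z₂, Y)`:
`Z₁, Z₂` i.i.d. standard Gaussian, `Y ∈ {±1}` with `P(Y = 1 | Z₁) = q(Z₁)`. -/
def Eexp (αc α₂ R : ℝ) (F : ℝ → ℝ → ℝ → ℝ) : ℝ :=
  ∫ z₁, (∫ z₂, (qfun αc α₂ R z₁ * F z₁ z₂ 1
      + (1 - qfun αc α₂ R z₁) * F z₁ z₂ (-1)) ∂stdGauss) ∂stdGauss

/-- `V(Z₁, Z₂) = ξR√α₂·Z₁ + σ√α₂·Z₂`. -/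
def Vfun (α₂ R σ ξ z₁ z₂ : ℝ) : ℝ := ξ * R * Real.sqrt α₂ * z₁ + σ * Real.sqrt α₂ * z₂

/-- The asymptotic loss `L(σ, ξ, γ)`. -/
def Lasym (lam δ αc α₂ R σ ξ γ : ℝ) : ℝ :=
  lam * (σ ^ 2 + ξ ^ 2 * R ^ 2) / 2 - α₂ * γ * σ ^ 2 / (2 * δ) +
    Eexp αc α₂ R fun z₁ z₂ y =>
      ⨅ u : ℝ, (rho (-(y * u)) + γ / 2 * (u - Vfun α₂ R σ ξ z₁ z₂) ^ 2)

/-- Assumption 1 (parameter regularity), for the scalar parameters. -/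
def Assump1 (K₁ K₂ δ R αc α₂ : ℝ) : Prop :=
  0 < K₁ ∧ K₁ ≤ K₂ ∧ δ ∈ Icc K₁ K₂ ∧ R ∈ Icc K₁ K₂ ∧ αc ∈ Icc K₁ K₂ ∧ α₂ ∈ Icc K₁ K₂ ∧
    αc ≤ Real.sqrt α₂

/-- `(σs, ξs, γs)` is a saddle point of the asymptotic loss. -/
def Saddle (lam δ αc α₂ R σs ξs γs : ℝ) : Prop :=
  ∀ σ ξ γ : ℝ, 0 ≤ σ → 0 ≤ γ →
    Lasym lam δ αc α₂ R σ ξ γs ≤ Lasym lam δ αc α₂ R σs ξs γs ∧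
      Lasym lam δ αc α₂ R σs ξs γs ≤ Lasym lam δ αc α₂ R σs ξs γ



/-! ## Auxiliary lemmas -/

lemma one_add_exp_pos (t : ℝ) : 0 < 1 + Real.exp t := by positivity

lemma rho_nonneg (t : ℝ) : 0 ≤ rho t := by
  unfold rho
  have : (1:ℝ) ≤ 1 + Real.exp t := by nlinarith [Real.exp_pos t]
  exact Real.log_nonneg this

lemma rho_le (t : ℝ) : rho t ≤ Real.log 2 + |t| := by
  unfold rho
  have h1 : 1 + Real.exp t ≤ 2 * Real.exp |t| := by
    have h2 : Real.exp t ≤ Real.exp |t| := Real.exp_le_exp.2 (le_abs_self t)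
    have h3 : (1:ℝ) ≤ Real.exp |t| := Real.one_le_exp (abs_nonneg t)
    nlinarith
  calc Real.log (1 + Real.exp t) ≤ Real.log (2 * Real.exp |t|) :=
        Real.log_le_log (one_add_exp_pos t) h1
    _ = Real.log 2 + |t| := by rw [Real.log_mul (by norm_num) (Real.exp_ne_zero _), Real.log_exp]

lemma rho'_pos (t : ℝ) : 0 < rho' t := by
  unfold rho'; positivity

lemma rho'_nonneg (t : ℝ) : 0 ≤ rho' t := (rho'_pos t).le

lemma rho'_le_one (t : ℝ) : rho' t ≤ 1 := by
  unfold rho'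
  rw [div_le_one (one_add_exp_pos t)]
  linarith

lemma hasDerivAt_rho (t : ℝ) : HasDerivAt rho (rho' t) t := by
  have h1 : HasDerivAt (fun t : ℝ => 1 + Real.exp t) (Real.exp t) t :=
    (Real.hasDerivAt_exp t).const_add 1
  have h2 := h1.log (one_add_exp_pos t).ne'
  exact h2

lemma rho_lipschitz (x y : ℝ) : |rho x - rho y| ≤ |x - y| := by
  have h : LipschitzWith 1 rho := by
    apply lipschitzWith_of_nnnorm_deriv_le (fun t => (hasDerivAt_rho t).differentiableAt)
    intro t
    rw [(hasDerivAt_rho t).deriv]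
    rw [← NNReal.coe_le_coe]
    simp [Real.nnnorm_of_nonneg (rho'_nonneg t), abs_of_nonneg (rho'_nonneg t),
      Real.norm_eq_abs]
    exact (abs_of_nonneg (rho'_nonneg t)) ▸ rho'_le_one t
  have := h.dist_le_mul x y
  simpa [Real.dist_eq] using this

lemma hasDerivAt_rho' (t : ℝ) : HasDerivAt rho' (rho' t * (1 - rho' t)) t := by
  have h1 : HasDerivAt (fun t : ℝ => 1 + Real.exp t) (Real.exp t) t :=
    (Real.hasDerivAt_exp t).const_add 1
  have h2 := (Real.hasDerivAt_exp t).div h1 (one_add_exp_pos t).ne'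
  refine h2.congr_deriv ?_
  unfold rho'
  field_simp

lemma rho'_deriv_bound (t : ℝ) : rho' t * (1 - rho' t) ≤ 1/4 := by
  nlinarith [rho'_pos t, rho'_le_one t, sq_nonneg (rho' t - 1/2)]

lemma rho'_lipschitz (x y : ℝ) : |rho' x - rho' y| ≤ (1/4) * |x - y| := by
  have h : LipschitzWith (1/4 : ℝ≥0) rho' := by
    apply lipschitzWith_of_nnnorm_deriv_le (fun t => (hasDerivAt_rho' t).differentiableAt)
    intro t
    rw [(hasDerivAt_rho' t).deriv]
    rw [← NNReal.coe_le_coe]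
    have h0 : 0 ≤ rho' t * (1 - rho' t) := by
      nlinarith [rho'_pos t, rho'_le_one t]
    push_cast
    rw [Real.norm_eq_abs, abs_of_nonneg h0]
    exact (rho'_deriv_bound t).trans (by norm_num)
  have := h.dist_le_mul x y
  rw [Real.dist_eq, Real.dist_eq] at this
  exact this.trans_eq (by norm_num)

lemma rho'_sq_lipschitz (x y : ℝ) : |rho' x ^ 2 - rho' y ^ 2| ≤ (1/2) * |x - y| := by
  have h1 := rho'_lipschitz x y
  have h2 : |rho' x + rho' y| ≤ 2 := by
    rw [abs_of_nonneg (by nlinarith [rho'_pos x, rho'_pos y] : (0:ℝ) ≤ rho' x + rho' y)]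
    linarith [rho'_le_one x, rho'_le_one y]
  calc |rho' x ^ 2 - rho' y ^ 2| = |rho' x + rho' y| * |rho' x - rho' y| := by
        rw [← abs_mul]; ring_nf
    _ ≤ 2 * ((1/4) * |x - y|) := by
        apply mul_le_mul h2 h1 (abs_nonneg _) (by norm_num)
    _ = (1/2) * |x - y| := by ring

lemma rho'_ge (t : ℝ) : Real.exp (-|t|) / 2 ≤ rho' t := by
  unfold rho'
  rcases le_or_gt 0 t with h | h
  · have h1 : Real.exp (-|t|) ≤ 1 := Real.exp_le_one_iff.2 (by simp [abs_of_nonneg h]; positivity)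
    have h2 : (1:ℝ)/2 ≤ Real.exp t / (1 + Real.exp t) := by
      rw [div_le_div_iff₀ (by norm_num) (one_add_exp_pos t)]
      have := Real.one_le_exp h
      linarith
    linarith
  · rw [abs_of_neg h, neg_neg]
    have h2 : 1 + Real.exp t ≤ 2 := by
      have : Real.exp t ≤ 1 := Real.exp_le_one_iff.2 h.le
      linarith
    rw [div_le_div_iff₀ (by norm_num) (one_add_exp_pos t)]
    nlinarith [Real.exp_pos t]

lemma rho_taylor (x h : ℝ) : rho (x + h) ≤ rho x + rho' x * h + h^2/8 := by
  set φ : ℝ → ℝ := fun s => rho (x + s) - rho x - rho' x * s - s^2/8 with hφ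
  have hd : ∀ s, HasDerivAt φ (rho' (x + s) - rho' x - s/4) s := by
    intro s
    have h1 : HasDerivAt (fun s : ℝ => rho (x + s)) (rho' (x + s)) s := by
      have := (hasDerivAt_rho (x + s)).comp s ((hasDerivAt_id s).const_add x)
      exact this.congr_deriv (mul_one _)
    have h2 : HasDerivAt (fun s : ℝ => rho x + rho' x * s + s^2/8) (rho' x + s/4) s := by
      have ha : HasDerivAt (fun s : ℝ => rho' x * s) (rho' x) s := by
        simpa using (hasDerivAt_id s).const_mul (rho' x)
      have hb : HasDerivAt (fun s : ℝ => s^2/8) (s/4) s := by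
        have := (hasDerivAt_pow 2 s).div_const 8
        exact this.congr_deriv (by norm_num; ring)
      exact ((ha.const_add (rho x)).add hb)
    have := h1.sub h2
    have e : φ = ((fun s : ℝ => rho (x + s)) - fun s : ℝ => rho x + rho' x * s + s ^ 2 / 8) := by
      funext s; simp only [hφ, Pi.sub_apply]; ring
    rw [e]; exact this.congr_deriv (by ring)
  have hcont : ∀ S : Set ℝ, ContinuousOn φ S := fun S =>
    (Differentiable.continuous (fun s => (hd s).differentiableAt)).continuousOn
  have hdiff : ∀ S : Set ℝ, DifferentiableOn ℝ φ S := fun S =>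
    (Differentiable.differentiableOn (fun s => (hd s).differentiableAt))
  have key : ∀ s : ℝ, φ s ≤ φ 0 := by
    intro s
    rcases le_or_gt 0 s with hs | hs
    · have hanti : AntitoneOn φ (Ici 0) := by
        apply antitoneOn_of_deriv_nonpos (convex_Ici 0) (hcont _) (hdiff _)
        intro t ht
        rw [interior_Ici] at ht
        rw [(hd t).deriv]
        have h1 := abs_le.1 (rho'_lipschitz (x + t) x)
        have ht' : (0:ℝ) < t := ht
        have : |x + t - x| = t := by rw [show x + t - x = t by ring, abs_of_pos ht']
        rw [this] at h1
        linarith [h1.2]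
      exact hanti (le_refl (0:ℝ) : (0:ℝ) ∈ Ici 0) hs hs
    · have hmono : MonotoneOn φ (Iic 0) := by
        apply monotoneOn_of_deriv_nonneg (convex_Iic 0) (hcont _) (hdiff _)
        intro t ht
        rw [interior_Iic] at ht
        rw [(hd t).deriv]
        have h1 := abs_le.1 (rho'_lipschitz (x + t) x)
        have ht' : t < 0 := ht
        have : |x + t - x| = -t := by rw [show x + t - x = t by ring, abs_of_neg ht']
        rw [this] at h1
        linarith [h1.1]
      exact hmono hs.le (le_refl (0:ℝ) : (0:ℝ) ∈ Iic 0) hs.le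
  have := key h
  simp [hφ] at this
  linarith


/-! ### Moreau envelope -/

def mor (γ y v : ℝ) : ℝ := ⨅ u : ℝ, (rho (-(y * u)) + γ / 2 * (u - v) ^ 2)

lemma mor_bddBelow (γ y v : ℝ) (hγ : 0 ≤ γ) :
    BddBelow (range fun u : ℝ => rho (-(y * u)) + γ / 2 * (u - v) ^ 2) := by
  refine ⟨0, ?_⟩
  rintro x ⟨u, rfl⟩
  have := rho_nonneg (-(y * u))
  positivity

lemma mor_nonneg (γ y v : ℝ) (hγ : 0 ≤ γ) : 0 ≤ mor γ y v := by
  apply le_ciInf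
  intro u
  have := rho_nonneg (-(y * u))
  positivity

lemma mor_le_rho (γ y v : ℝ) (hγ : 0 ≤ γ) : mor γ y v ≤ rho (-(y * v)) := by
  have h := ciInf_le (mor_bddBelow γ y v hγ) v
  unfold mor; simpa using h

lemma mor_ge (γ y v : ℝ) (hγ : 0 < γ) (hy : y = 1 ∨ y = -1) :
    rho (-(y * v)) - 1 / (2 * γ) ≤ mor γ y v := by
  apply le_ciInf
  intro u
  have h1 : |rho (-(y * u)) - rho (-(y * v))| ≤ |u - v| := by
    have h0 := rho_lipschitz (-(y * u)) (-(y * v))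
    have hy1 : |(-(y * u)) - (-(y * v))| = |u - v| := by
      have he : (-(y * u)) - (-(y * v)) = y * (v - u) := by ring
      rw [he, abs_mul]
      have hy2 : |y| = 1 := by rcases hy with rfl | rfl <;> simp
      rw [hy2, one_mul, abs_sub_comm]
    rwa [hy1] at h0
  have h3 := (abs_le.1 h1).1
  have h5 : |u - v| - γ/2*(u - v)^2 ≤ 1/(2*γ) := by
    have ht : (u - v)^2 = |u - v|^2 := (sq_abs _).symm
    rw [ht, le_div_iff₀ (by positivity : (0:ℝ) < 2*γ)]
    nlinarith [sq_nonneg (γ*|u - v| - 1)]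
  linarith

lemma mor_le_taylor (γ y v : ℝ) (hγ : 0 ≤ γ) (hy : y = 1 ∨ y = -1) :
    mor γ y v ≤ rho (-(y * v)) - rho' (-(y * v)) ^ 2 / (2 * (γ + 4⁻¹)) := by
  set x := -(y * v) with hx
  set p := rho' x with hp
  set s := p / (γ + 4⁻¹) with hs
  have hγ4 : (0:ℝ) < γ + 4⁻¹ := by linarith
  have key : rho (-(y * (v + y * s))) + γ / 2 * ((v + y * s) - v) ^ 2 ≤
      rho x - p ^ 2 / (2 * (γ + 4⁻¹)) := by
    have hy2 : y * y = 1 := by rcases hy with rfl | rfl <;> norm_num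
    have h1 : -(y * (v + y * s)) = x - s := by rw [hx]; linear_combination (-s) * hy2
    have h2 : ((v + y * s) - v) ^ 2 = s ^ 2 := by linear_combination (s^2 + 2*v*y*s - 2*v*y*s) * hy2
    rw [h1, h2]
    have h3 : rho (x - s) ≤ rho x + rho' x * (-s) + (-s)^2/8 := by
      have := rho_taylor x (-s)
      simpa [sub_eq_add_neg] using this
    have h4 : rho x - p * s + s^2/8 + γ/2 * s^2 = rho x - p^2/(2*(γ+4⁻¹)) := by
      rw [hs]
      field_simp
      ring
    nlinarith [h3]
  calc mor γ y v ≤ rho (-(y * (v + y * s))) + γ / 2 * ((v + y * s) - v) ^ 2 :=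
        ciInf_le (mor_bddBelow γ y v hγ) _
    _ ≤ _ := key

lemma mor_eq_rat (γ y v : ℝ) (hγ : 0 ≤ γ) :
    mor γ y v = ⨅ q : ℚ, (rho (-(y * (q:ℝ))) + γ / 2 * ((q:ℝ) - v) ^ 2) := by
  set f : ℝ → ℝ := fun u => rho (-(y * u)) + γ / 2 * (u - v) ^ 2 with hf
  have hfc : Continuous f := by
    apply Continuous.add
    · exact (Differentiable.continuous (fun t => (hasDerivAt_rho t).differentiableAt)).comp
        (by continuity)
    · continuity
  have hbd : BddBelow (range f) := mor_bddBelow γ y v hγ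
  have hbd2 : BddBelow (range fun q : ℚ => f q) := by
    obtain ⟨c, hc⟩ := hbd
    exact ⟨c, by rintro x ⟨q, rfl⟩; exact hc ⟨q, rfl⟩⟩
  apply le_antisymm
  · apply le_ciInf
    intro q
    exact ciInf_le hbd _
  · apply le_ciInf
    intro u
    by_contra hlt
    push_neg at hlt
    set ε := (⨅ q : ℚ, f q) - f u with hε
    have hlt' : f u < ⨅ q : ℚ, f ↑q := hlt
    have hεpos : 0 < ε := by simp only [hε]; linarith
    obtain ⟨δ', hδ'pos, hδ'⟩ := Metric.continuous_iff.1 hfc u ε hεpos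
    obtain ⟨q, hq⟩ := exists_rat_near u hδ'pos
    have := hδ' q (by rwa [Real.dist_eq, abs_sub_comm])
    rw [Real.dist_eq] at this
    have h2 : f q < f u + ε := by
      have := abs_lt.1 this
      linarith [this.1, this.2]
    have h3 : (⨅ q : ℚ, f q) ≤ f q := ciInf_le hbd2 q
    simp only [hε] at h2
    linarith

lemma measurable_mor (γ y : ℝ) (hγ : 0 ≤ γ) : Measurable fun v => mor γ y v := by
  have : (fun v => mor γ y v) =
      fun v => ⨅ q : ℚ, (rho (-(y * (q:ℝ))) + γ / 2 * ((q:ℝ) - v) ^ 2) := by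
    funext v; exact mor_eq_rat γ y v hγ
  rw [this]
  apply Measurable.iInf
  intro q
  fun_prop

/-! ### Standard Gaussian facts -/


instance : IsProbabilityMeasure stdGauss := by
  unfold stdGauss; infer_instance

lemma stdGauss_eq : stdGauss =
    (volume : Measure ℝ).withDensity (fun x => ((gaussianPDFReal 0 1 x).toNNReal : ℝ≥0∞)) := by
  unfold stdGauss
  rw [gaussianReal_of_var_ne_zero _ one_ne_zero]
  congr 1

lemma measurable_pdf01 : Measurable fun x => (gaussianPDFReal 0 1 x).toNNReal :=
  (measurable_gaussianPDFReal 0 1).real_toNNReal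

lemma integral_stdGauss (g : ℝ → ℝ) :
    ∫ x, g x ∂stdGauss = ∫ x, gaussianPDFReal 0 1 x * g x := by
  rw [stdGauss_eq, integral_withDensity_eq_integral_smul measurable_pdf01 g]
  congr 1
  funext x
  rw [NNReal.smul_def, smul_eq_mul, Real.coe_toNNReal _ (gaussianPDFReal_nonneg 0 1 x)]

lemma integrable_stdGauss_iff {g : ℝ → ℝ} :
    Integrable g stdGauss ↔ Integrable (fun x => gaussianPDFReal 0 1 x * g x) volume := by
  rw [stdGauss_eq, integrable_withDensity_iff_integrable_smul measurable_pdf01]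
  have he : (fun x => (gaussianPDFReal 0 1 x).toNNReal • g x) =
      fun x => gaussianPDFReal 0 1 x * g x := by
    funext x
    rw [NNReal.smul_def, smul_eq_mul, Real.coe_toNNReal _ (gaussianPDFReal_nonneg 0 1 x)]
  rw [he]

lemma pdf01_le (x : ℝ) : gaussianPDFReal 0 1 x ≤ Real.exp (-x^2/2) := by
  unfold gaussianPDFReal
  simp only [NNReal.coe_one, mul_one, sub_zero]
  have hπ : (1:ℝ) ≤ 2 * π := by nlinarith [Real.pi_gt_three]
  have h1 : (1:ℝ) ≤ Real.sqrt (2 * π) := by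
    have := Real.sqrt_le_sqrt hπ
    rwa [Real.sqrt_one] at this
  have h2 : (Real.sqrt (2 * π))⁻¹ ≤ 1 := by
    rw [inv_le_one_iff₀]; right; exact h1
  have h3 : -x^2/(2:ℝ) = -(x^2/2) := by ring
  calc (Real.sqrt (2 * π))⁻¹ * Real.exp (-x^2/2) ≤ 1 * Real.exp (-x^2/2) :=
        mul_le_mul_of_nonneg_right h2 (Real.exp_nonneg _)
    _ = Real.exp (-x^2/2) := one_mul _

lemma pdf01_nonneg (x : ℝ) : 0 ≤ gaussianPDFReal 0 1 x := gaussianPDFReal_nonneg 0 1 x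

lemma sq_le_exp_quarter (x : ℝ) : x^2 ≤ 2 * Real.exp (x^2/4) := by
  have h := Real.add_one_le_exp (x^2/8)
  rw [show x^2/4 = x^2/8 + x^2/8 by ring, Real.exp_add]
  nlinarith [sq_nonneg (x^2 - 8), Real.exp_nonneg (x^2/8), sq_nonneg (Real.exp (x^2/8) - 1 - x^2/8)]

lemma dominating_integrable : Integrable (fun x : ℝ => 3 * Real.exp (-(4:ℝ)⁻¹ * x^2)) volume :=
  (integrable_exp_neg_mul_sq (by norm_num : (0:ℝ) < 4⁻¹)).const_mul 3

lemma quad_pdf_bound (x : ℝ) : (1 + x^2) * gaussianPDFReal 0 1 x ≤ 3 * Real.exp (-(4:ℝ)⁻¹ * x^2) := by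
  have h1 : (1 + x^2) ≤ 3 * Real.exp (x^2/4) := by
    have := sq_le_exp_quarter x
    have h2 : (1:ℝ) ≤ Real.exp (x^2/4) := Real.one_le_exp (by positivity)
    linarith
  have h2 := pdf01_le x
  have h3 : (0:ℝ) ≤ 1 + x^2 := by positivity
  calc (1 + x^2) * gaussianPDFReal 0 1 x ≤ (3 * Real.exp (x^2/4)) * Real.exp (-x^2/2) := by
        apply mul_le_mul h1 h2 (pdf01_nonneg x) (by positivity)
    _ = 3 * Real.exp (-(4:ℝ)⁻¹ * x^2) := by
        rw [mul_assoc, ← Real.exp_add]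
        ring_nf

lemma integrable_quad_stdGauss : Integrable (fun x : ℝ => 1 + x^2) stdGauss := by
  rw [integrable_stdGauss_iff]
  apply Integrable.mono' dominating_integrable
  · exact ((measurable_gaussianPDFReal 0 1).mul (by fun_prop)).aestronglyMeasurable
  · filter_upwards with x
    rw [Real.norm_eq_abs, abs_of_nonneg (mul_nonneg (pdf01_nonneg x) (by positivity : (0:ℝ) ≤ 1 + x^2))]
    rw [mul_comm]
    exact quad_pdf_bound x

lemma integrable_of_quad_bound {g : ℝ → ℝ} (c : ℝ) (hm : AEStronglyMeasurable g stdGauss)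
    (h : ∀ x, |g x| ≤ c * (1 + x^2)) : Integrable g stdGauss := by
  apply Integrable.mono' (integrable_quad_stdGauss.const_mul c) hm
  filter_upwards with x
  rw [Real.norm_eq_abs]
  exact h x

lemma integrable_sq_stdGauss : Integrable (fun x : ℝ => x^2) stdGauss :=
  integrable_of_quad_bound 1 (by fun_prop) (fun x => by rw [one_mul, abs_of_nonneg (sq_nonneg x)]; nlinarith)

lemma integrable_abs_stdGauss : Integrable (fun x : ℝ => |x|) stdGauss :=
  integrable_of_quad_bound 1 measurable_abs.aestronglyMeasurable (fun x => by
    rw [abs_abs, one_mul]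
    nlinarith [sq_nonneg (|x| - 1), sq_abs x, abs_nonneg x])

lemma integrable_id_stdGauss : Integrable (fun x : ℝ => x) stdGauss :=
  integrable_of_quad_bound 1 measurable_id.aestronglyMeasurable (fun x => by
    rw [one_mul]
    nlinarith [sq_nonneg (|x| - 1), sq_abs x, abs_nonneg x])

lemma integral_sq_nonneg_stdGauss : 0 ≤ ∫ x, x^2 ∂stdGauss :=
  integral_nonneg (fun x => sq_nonneg x)

lemma integral_sq_le_stdGauss : ∫ x, x^2 ∂stdGauss ≤ 8 := by
  rw [integral_stdGauss]
  have h1 : ∫ x, gaussianPDFReal 0 1 x * x^2 ≤ ∫ x : ℝ, 2 * Real.exp (-(4:ℝ)⁻¹ * x^2) := by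
    apply integral_mono
    · rw [← integrable_stdGauss_iff]; exact integrable_sq_stdGauss
    · exact (integrable_exp_neg_mul_sq (by norm_num : (0:ℝ) < 4⁻¹)).const_mul 2
    · intro x
      have h2 := pdf01_le x
      have h3 := sq_le_exp_quarter x
      calc gaussianPDFReal 0 1 x * x^2 ≤ Real.exp (-x^2/2) * (2 * Real.exp (x^2/4)) := by
            apply mul_le_mul h2 h3 (sq_nonneg x) (Real.exp_nonneg _)
        _ = 2 * Real.exp (-(4:ℝ)⁻¹ * x^2) := by rw [← mul_assoc, mul_comm _ (2:ℝ), mul_assoc, ← Real.exp_add]; ring_nf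
  have h2 : ∫ x : ℝ, 2 * Real.exp (-(4:ℝ)⁻¹ * x^2) = 2 * Real.sqrt (π / 4⁻¹) := by
    rw [integral_const_mul, integral_gaussian]
  have h3 : Real.sqrt (π / 4⁻¹) ≤ 4 := by
    have h4 : Real.sqrt (π / 4⁻¹) ≤ Real.sqrt 16 := Real.sqrt_le_sqrt (by rw [show (π / 4⁻¹ : ℝ) = 4 * π by field_simp]; nlinarith [Real.pi_lt_d2])
    rwa [show (16:ℝ) = 4^2 by norm_num, Real.sqrt_sq (by norm_num : (0:ℝ) ≤ 4)] at h4
  linarith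

lemma integral_one_stdGauss : ∫ _x : ℝ, (1:ℝ) ∂stdGauss = 1 := by simp

lemma integral_quad_stdGauss : ∫ x, (1 + x^2) ∂stdGauss = 1 + ∫ x, x^2 ∂stdGauss := by
  rw [integral_add (integrable_const 1) integrable_sq_stdGauss]
  simp

lemma integral_abs_nonneg_stdGauss : 0 ≤ ∫ x, |x| ∂stdGauss :=
  integral_nonneg fun x => abs_nonneg x

lemma integral_abs_le_stdGauss : ∫ x, |x| ∂stdGauss ≤ 5 := by
  have h1 : ∫ x, |x| ∂stdGauss ≤ ∫ x, (1 + x^2)/2 ∂stdGauss := by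
    apply integral_mono integrable_abs_stdGauss (integrable_quad_stdGauss.div_const 2)
    intro x
    nlinarith [sq_nonneg (|x| - 1), sq_abs x]
  have h2 : ∫ x, (1 + x^2)/2 ∂stdGauss = (1 + ∫ x, x^2 ∂stdGauss)/2 := by
    rw [integral_div, integral_quad_stdGauss]
  rw [h2] at h1
  linarith [integral_sq_le_stdGauss]

lemma integral_id_stdGauss : ∫ x, x ∂stdGauss = 0 := by
  rw [integral_stdGauss]
  set f : ℝ → ℝ := fun x => gaussianPDFReal 0 1 x * x with hf
  have h1 : ∫ x, f (-x) = ∫ x, f x := integral_neg_eq_self f volume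
  have heven : ∀ x : ℝ, gaussianPDFReal 0 1 (-x) = gaussianPDFReal 0 1 x := by
    intro x
    unfold gaussianPDFReal
    norm_num
  have h2 : (fun x => f (-x)) = fun x => - f x := by
    funext x
    simp only [hf, heven x]
    ring
  rw [h2, integral_neg] at h1
  linarith

lemma continuous_rho : Continuous rho :=
  Differentiable.continuous fun t => (hasDerivAt_rho t).differentiableAt

lemma continuous_rho' : Continuous rho' :=
  Differentiable.continuous fun t => (hasDerivAt_rho' t).differentiableAt

/-! ### qfun facts -/

lemma qfun_nonneg (αc α₂ R z : ℝ) : 0 ≤ qfun αc α₂ R z :=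
  integral_nonneg fun g => rho'_nonneg _

lemma qfun_le_one (αc α₂ R z : ℝ) : qfun αc α₂ R z ≤ 1 := by
  unfold qfun
  have h1 : Integrable (fun g : ℝ =>
      rho' ((αc / Real.sqrt α₂) * R * z + Real.sqrt (1 - αc ^ 2 / α₂) * R * g)) stdGauss := by
    apply integrable_of_quad_bound 1
    · exact (continuous_rho'.comp (by continuity)).aestronglyMeasurable
    · intro g
      rw [one_mul, abs_of_nonneg (rho'_nonneg _)]
      nlinarith [rho'_le_one ((αc / Real.sqrt α₂) * R * z + Real.sqrt (1 - αc ^ 2 / α₂) * R * g),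
        sq_nonneg z, sq_nonneg g]
  calc _ ≤ ∫ _g : ℝ, (1:ℝ) ∂stdGauss := integral_mono h1 (integrable_const 1) fun g => rho'_le_one _
    _ = 1 := integral_one_stdGauss

lemma measurable_qfun (αc α₂ R : ℝ) : Measurable (qfun αc α₂ R) := by
  unfold qfun
  have h : StronglyMeasurable (fun p : ℝ × ℝ =>
      rho' ((αc / Real.sqrt α₂) * R * p.1 + Real.sqrt (1 - αc ^ 2 / α₂) * R * p.2)) :=
    (continuous_rho'.comp (by continuity)).stronglyMeasurable
  exact h.integral_prod_right'.measurable

/-! ### Eexp machinery -/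

def EexpInt (αc α₂ R : ℝ) (F : ℝ → ℝ → ℝ → ℝ) (z₁ z₂ : ℝ) : ℝ :=
  qfun αc α₂ R z₁ * F z₁ z₂ 1 + (1 - qfun αc α₂ R z₁) * F z₁ z₂ (-1)

lemma Eexp_eq (αc α₂ R : ℝ) (F : ℝ → ℝ → ℝ → ℝ) :
    Eexp αc α₂ R F = ∫ z₁, (∫ z₂, EexpInt αc α₂ R F z₁ z₂ ∂stdGauss) ∂stdGauss := rfl

def NiceF (F : ℝ → ℝ → ℝ → ℝ) (c : ℝ) : Prop :=
  (∀ y : ℝ, Measurable fun p : ℝ × ℝ => F p.1 p.2 y) ∧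
  (∀ z₁ z₂ y : ℝ, (y = 1 ∨ y = -1) → |F z₁ z₂ y| ≤ c * (1 + z₁^2 + z₂^2))

lemma NiceF.c_nonneg {F : ℝ → ℝ → ℝ → ℝ} {c : ℝ} (hF : NiceF F c) : 0 ≤ c := by
  have := hF.2 0 0 1 (Or.inl rfl)
  have h2 := abs_nonneg (F 0 0 1)
  nlinarith

section EexpLemmas
variable {αc α₂ R : ℝ} {F G : ℝ → ℝ → ℝ → ℝ} {c d : ℝ}

lemma NiceF.meas_z₂ (hF : NiceF F c) (z₁ y : ℝ) : Measurable fun z₂ => F z₁ z₂ y :=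
  (hF.1 y).comp (measurable_const.prodMk measurable_id)

lemma niceF_inner_integrable (hF : NiceF F c) (z₁ : ℝ) :
    Integrable (EexpInt αc α₂ R F z₁) stdGauss := by
  apply integrable_of_quad_bound (c * (1 + z₁^2))
  · exact (((hF.meas_z₂ z₁ 1).const_mul _).add
      ((hF.meas_z₂ z₁ (-1)).const_mul _)).aestronglyMeasurable
  · intro z₂
    have hq0 := qfun_nonneg αc α₂ R z₁
    have hq1 := qfun_le_one αc α₂ R z₁
    have h1 := hF.2 z₁ z₂ 1 (Or.inl rfl)
    have h2 := hF.2 z₁ z₂ (-1) (Or.inr rfl)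
    have hc := hF.c_nonneg
    have hb : |EexpInt αc α₂ R F z₁ z₂| ≤ c * (1 + z₁^2 + z₂^2) := by
      unfold EexpInt
      calc |qfun αc α₂ R z₁ * F z₁ z₂ 1 + (1 - qfun αc α₂ R z₁) * F z₁ z₂ (-1)|
          ≤ |qfun αc α₂ R z₁ * F z₁ z₂ 1| + |(1 - qfun αc α₂ R z₁) * F z₁ z₂ (-1)| := abs_add_le _ _
        _ = qfun αc α₂ R z₁ * |F z₁ z₂ 1| + (1 - qfun αc α₂ R z₁) * |F z₁ z₂ (-1)| := by
            rw [abs_mul, abs_mul, abs_of_nonneg hq0, abs_of_nonneg (show (0:ℝ) ≤ 1 - qfun αc α₂ R z₁ by linarith)]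
        _ ≤ qfun αc α₂ R z₁ * (c * (1 + z₁^2 + z₂^2)) +
            (1 - qfun αc α₂ R z₁) * (c * (1 + z₁^2 + z₂^2)) := by
            apply add_le_add
            · exact mul_le_mul_of_nonneg_left h1 hq0
            · exact mul_le_mul_of_nonneg_left h2 (by linarith)
        _ = c * (1 + z₁^2 + z₂^2) := by ring
    refine hb.trans ?_
    have : c * (1 + z₁^2 + z₂^2) ≤ (c * (1 + z₁^2)) * (1 + z₂^2) := by nlinarith [sq_nonneg z₁, sq_nonneg z₂, sq_nonneg (z₁*z₂)]
    exact this

lemma niceF_inner_bound (hF : NiceF F c) (z₁ : ℝ) :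
    |∫ z₂, EexpInt αc α₂ R F z₁ z₂ ∂stdGauss| ≤ 9 * c * (1 + z₁^2) := by
  have hc := hF.c_nonneg
  have h1 : |∫ z₂, EexpInt αc α₂ R F z₁ z₂ ∂stdGauss| ≤
      ∫ z₂, |EexpInt αc α₂ R F z₁ z₂| ∂stdGauss := by
    simpa [Real.norm_eq_abs] using norm_integral_le_integral_norm (μ := stdGauss) (f := fun z₂ => EexpInt αc α₂ R F z₁ z₂)
  have h2 : ∫ z₂, |EexpInt αc α₂ R F z₁ z₂| ∂stdGauss ≤
      ∫ z₂, (c * (1 + z₁^2)) * (1 + z₂^2) ∂stdGauss := by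
    apply integral_mono (niceF_inner_integrable hF z₁).abs
      ((integrable_quad_stdGauss).const_mul _)
    intro z₂
    -- same bound as above
    have hq0 := qfun_nonneg αc α₂ R z₁
    have hq1 := qfun_le_one αc α₂ R z₁
    have h1' := hF.2 z₁ z₂ 1 (Or.inl rfl)
    have h2' := hF.2 z₁ z₂ (-1) (Or.inr rfl)
    have hb : |EexpInt αc α₂ R F z₁ z₂| ≤ c * (1 + z₁^2 + z₂^2) := by
      unfold EexpInt
      calc |qfun αc α₂ R z₁ * F z₁ z₂ 1 + (1 - qfun αc α₂ R z₁) * F z₁ z₂ (-1)|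
          ≤ |qfun αc α₂ R z₁ * F z₁ z₂ 1| + |(1 - qfun αc α₂ R z₁) * F z₁ z₂ (-1)| := abs_add_le _ _
        _ = qfun αc α₂ R z₁ * |F z₁ z₂ 1| + (1 - qfun αc α₂ R z₁) * |F z₁ z₂ (-1)| := by
            rw [abs_mul, abs_mul, abs_of_nonneg hq0, abs_of_nonneg (show (0:ℝ) ≤ 1 - qfun αc α₂ R z₁ by linarith)]
        _ ≤ _ := by
            apply add_le_add (mul_le_mul_of_nonneg_left h1' hq0)
              (mul_le_mul_of_nonneg_left h2' (by linarith))
        _ = c * (1 + z₁^2 + z₂^2) := by ring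
    refine hb.trans ?_
    show c * (1 + z₁^2 + z₂^2) ≤ c * (1 + z₁^2) * (1 + z₂^2)
    nlinarith [sq_nonneg z₁, sq_nonneg z₂, sq_nonneg (z₁*z₂)]
  have h3 : ∫ z₂, (c * (1 + z₁^2)) * (1 + z₂^2) ∂stdGauss =
      (c * (1 + z₁^2)) * (1 + ∫ x, x^2 ∂stdGauss) := by
    rw [integral_const_mul, integral_quad_stdGauss]
  have h4 : (c * (1 + z₁^2)) * (1 + ∫ x, x^2 ∂stdGauss) ≤ (c * (1 + z₁^2)) * 9 := by
    apply mul_le_mul_of_nonneg_left _ (by positivity)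
    linarith [integral_sq_le_stdGauss]
  calc |∫ z₂, EexpInt αc α₂ R F z₁ z₂ ∂stdGauss| ≤ _ := h1
    _ ≤ _ := h2
    _ = _ := h3
    _ ≤ (c * (1 + z₁^2)) * 9 := h4
    _ = 9 * c * (1 + z₁^2) := by ring

lemma niceF_inner_meas (hF : NiceF F c) :
    Measurable fun z₁ => ∫ z₂, EexpInt αc α₂ R F z₁ z₂ ∂stdGauss := by
  have h : StronglyMeasurable (fun p : ℝ × ℝ => EexpInt αc α₂ R F p.1 p.2) := by
    apply Measurable.stronglyMeasurable
    unfold EexpInt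
    exact (((measurable_qfun αc α₂ R).comp measurable_fst).mul (hF.1 1)).add
      ((measurable_const.sub ((measurable_qfun αc α₂ R).comp measurable_fst)).mul (hF.1 (-1)))
  exact h.integral_prod_right'.measurable

lemma niceF_outer_integrable (hF : NiceF F c) :
    Integrable (fun z₁ => ∫ z₂, EexpInt αc α₂ R F z₁ z₂ ∂stdGauss) stdGauss := by
  apply integrable_of_quad_bound (9 * c) (niceF_inner_meas hF).aestronglyMeasurable
  intro z₁
  have := niceF_inner_bound hF (αc := αc) (α₂ := α₂) (R := R) z₁
  calc |∫ z₂, EexpInt αc α₂ R F z₁ z₂ ∂stdGauss| ≤ 9 * c * (1 + z₁^2) := this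
    _ ≤ 9 * c * (1 + z₁^2 + 0) := by ring_nf; rfl
    _ ≤ 9 * c * (1 + z₁^2) := by ring_nf; rfl

lemma Eexp_mono (hF : NiceF F c) (hG : NiceF G d)
    (h : ∀ z₁ z₂ y : ℝ, (y = 1 ∨ y = -1) → F z₁ z₂ y ≤ G z₁ z₂ y) :
    Eexp αc α₂ R F ≤ Eexp αc α₂ R G := by
  rw [Eexp_eq, Eexp_eq]
  apply integral_mono (niceF_outer_integrable hF) (niceF_outer_integrable hG)
  intro z₁
  apply integral_mono (niceF_inner_integrable hF z₁) (niceF_inner_integrable hG z₁)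
  intro z₂
  unfold EexpInt
  have hq0 := qfun_nonneg αc α₂ R z₁
  have hq1 := qfun_le_one αc α₂ R z₁
  apply add_le_add
  · exact mul_le_mul_of_nonneg_left (h z₁ z₂ 1 (Or.inl rfl)) hq0
  · exact mul_le_mul_of_nonneg_left (h z₁ z₂ (-1) (Or.inr rfl)) (by linarith)

lemma Eexp_const (k : ℝ) : Eexp αc α₂ R (fun _ _ _ => k) = k := by
  rw [Eexp_eq]
  have h : ∀ z₁ : ℝ, (∫ z₂, EexpInt αc α₂ R (fun _ _ _ => k) z₁ z₂ ∂stdGauss) = k := by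
    intro z₁
    have he : (fun z₂ : ℝ => EexpInt αc α₂ R (fun _ _ _ => k) z₁ z₂) = fun _ => k := by
      funext z₂; unfold EexpInt; ring
    rw [he]
    simp
  simp only [h]
  simp

lemma Eexp_abs : Eexp αc α₂ R (fun _ z₂ _ => |z₂|) = ∫ x, |x| ∂stdGauss := by
  rw [Eexp_eq]
  have h : ∀ z₁ : ℝ, (∫ z₂, EexpInt αc α₂ R (fun _ z₂ _ => |z₂|) z₁ z₂ ∂stdGauss) =
      ∫ x, |x| ∂stdGauss := by
    intro z₁
    have he : (fun z₂ : ℝ => EexpInt αc α₂ R (fun _ z₂ _ => |z₂|) z₁ z₂) = fun z₂ => |z₂| := by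
      funext z₂; unfold EexpInt; ring
    rw [he]
  simp only [h]
  simp

lemma Eexp_sub_mul (hF : NiceF F c) (hG : NiceF G d) (a : ℝ) :
    Eexp αc α₂ R (fun z₁ z₂ y => F z₁ z₂ y - a * G z₁ z₂ y) =
      Eexp αc α₂ R F - a * Eexp αc α₂ R G := by
  rw [Eexp_eq, Eexp_eq, Eexp_eq]
  have h : ∀ z₁ : ℝ, (∫ z₂, EexpInt αc α₂ R (fun z₁ z₂ y => F z₁ z₂ y - a * G z₁ z₂ y) z₁ z₂ ∂stdGauss)
      = (∫ z₂, EexpInt αc α₂ R F z₁ z₂ ∂stdGauss) - a * ∫ z₂, EexpInt αc α₂ R G z₁ z₂ ∂stdGauss := by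
    intro z₁
    have he : (fun z₂ => EexpInt αc α₂ R (fun z₁ z₂ y => F z₁ z₂ y - a * G z₁ z₂ y) z₁ z₂) =
        fun z₂ => EexpInt αc α₂ R F z₁ z₂ - a * EexpInt αc α₂ R G z₁ z₂ := by
      funext z₂; unfold EexpInt; ring
    rw [he, integral_sub (niceF_inner_integrable hF z₁)
      ((niceF_inner_integrable hG z₁).const_mul a), integral_const_mul]
  simp only [h]
  rw [integral_sub (niceF_outer_integrable hF)
    ((niceF_outer_integrable hG).const_mul a), integral_const_mul]

lemma NiceF.sub_mul (hF : NiceF F c) (hG : NiceF G d) (a : ℝ) :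
    NiceF (fun z₁ z₂ y => F z₁ z₂ y - a * G z₁ z₂ y) (c + |a| * d) := by
  constructor
  · intro y
    exact (hF.1 y).sub ((hG.1 y).const_mul a)
  · intro z₁ z₂ y hy
    have h1 := hF.2 z₁ z₂ y hy
    have h2 := hG.2 z₁ z₂ y hy
    have hd := hG.c_nonneg
    calc |F z₁ z₂ y - a * G z₁ z₂ y| ≤ |F z₁ z₂ y| + |a| * |G z₁ z₂ y| := by
          rw [← abs_mul]; exact abs_sub _ _
      _ ≤ c * (1 + z₁^2 + z₂^2) + |a| * (d * (1 + z₁^2 + z₂^2)) := by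
          apply add_le_add h1 (mul_le_mul_of_nonneg_left h2 (abs_nonneg a))
      _ = (c + |a| * d) * (1 + z₁^2 + z₂^2) := by ring

end EexpLemmas

/-! ### Specific functions -/

def Frho (α₂ R σ ξ : ℝ) : ℝ → ℝ → ℝ → ℝ := fun z₁ z₂ y => rho (-(y * Vfun α₂ R σ ξ z₁ z₂))
def Frhosq (α₂ R σ ξ : ℝ) : ℝ → ℝ → ℝ → ℝ := fun z₁ z₂ y => rho' (-(y * Vfun α₂ R σ ξ z₁ z₂)) ^ 2
def Fmor (α₂ R σ ξ γ : ℝ) : ℝ → ℝ → ℝ → ℝ := fun z₁ z₂ y => mor γ y (Vfun α₂ R σ ξ z₁ z₂)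

section Specific
variable (αc α₂ R σ ξ γ : ℝ)

lemma continuous_Vfun : Continuous fun p : ℝ × ℝ => Vfun α₂ R σ ξ p.1 p.2 := by
  unfold Vfun; fun_prop

lemma Vfun_abs_le (z₁ z₂ : ℝ) : |Vfun α₂ R σ ξ z₁ z₂| ≤
    |ξ * R * Real.sqrt α₂| * |z₁| + |σ * Real.sqrt α₂| * |z₂| := by
  unfold Vfun
  calc |ξ * R * Real.sqrt α₂ * z₁ + σ * Real.sqrt α₂ * z₂| ≤
      |ξ * R * Real.sqrt α₂ * z₁| + |σ * Real.sqrt α₂ * z₂| := abs_add_le _ _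
    _ = _ := by rw [abs_mul (ξ * R * Real.sqrt α₂) z₁, abs_mul (σ * Real.sqrt α₂) z₂]

lemma abs_y_vfun {y : ℝ} (hy : y = 1 ∨ y = -1) (v : ℝ) : |(-(y * v))| = |v| := by
  rcases hy with rfl | rfl <;> simp

lemma niceF_Frho : NiceF (Frho α₂ R σ ξ)
    (Real.log 2 + |ξ * R * Real.sqrt α₂| + |σ * Real.sqrt α₂|) := by
  constructor
  · intro y
    exact (continuous_rho.comp ((continuous_const.mul
      (continuous_Vfun α₂ R σ ξ)).neg)).measurable
  · intro z₁ z₂ y hy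
    unfold Frho
    have h0 := rho_nonneg (-(y * Vfun α₂ R σ ξ z₁ z₂))
    rw [abs_of_nonneg h0]
    have h1 := rho_le (-(y * Vfun α₂ R σ ξ z₁ z₂))
    rw [abs_y_vfun hy] at h1
    have h2 := Vfun_abs_le α₂ R σ ξ z₁ z₂
    have hlog : (0:ℝ) ≤ Real.log 2 := Real.log_nonneg (by norm_num)
    have hA : (0:ℝ) ≤ |ξ * R * Real.sqrt α₂| := abs_nonneg _
    have hS : (0:ℝ) ≤ |σ * Real.sqrt α₂| := abs_nonneg _
    nlinarith [sq_nonneg (|z₁| - 1), sq_nonneg (|z₂| - 1), sq_abs z₁, sq_abs z₂,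
      abs_nonneg z₁, abs_nonneg z₂, sq_nonneg z₁, sq_nonneg z₂,
      mul_nonneg hA (sq_nonneg z₂), mul_nonneg hS (sq_nonneg z₁)]

lemma niceF_Frhosq : NiceF (Frhosq α₂ R σ ξ) 1 := by
  constructor
  · intro y
    exact ((continuous_rho'.comp ((continuous_const.mul
      (continuous_Vfun α₂ R σ ξ)).neg)).pow 2).measurable
  · intro z₁ z₂ y _
    unfold Frhosq
    have h0 := rho'_nonneg (-(y * Vfun α₂ R σ ξ z₁ z₂))
    have h1 := rho'_le_one (-(y * Vfun α₂ R σ ξ z₁ z₂))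
    rw [abs_of_nonneg (by positivity)]
    nlinarith [sq_nonneg z₁, sq_nonneg z₂]

lemma niceF_Fmor (hγ : 0 ≤ γ) : NiceF (Fmor α₂ R σ ξ γ)
    (Real.log 2 + |ξ * R * Real.sqrt α₂| + |σ * Real.sqrt α₂|) := by
  constructor
  · intro y
    exact (measurable_mor γ y hγ).comp (continuous_Vfun α₂ R σ ξ).measurable
  · intro z₁ z₂ y hy
    unfold Fmor
    have h0 := mor_nonneg γ y (Vfun α₂ R σ ξ z₁ z₂) hγ
    rw [abs_of_nonneg h0]
    have h1 := mor_le_rho γ y (Vfun α₂ R σ ξ z₁ z₂) hγ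
    have h2 := (niceF_Frho α₂ R σ ξ).2 z₁ z₂ y hy
    unfold Frho at h2
    rw [abs_of_nonneg (rho_nonneg _)] at h2
    exact h1.trans h2

lemma niceF_abs : NiceF (fun _ z₂ _ => |z₂| : ℝ → ℝ → ℝ → ℝ) 1 := by
  constructor
  · intro y; exact measurable_snd.abs
  · intro z₁ z₂ y _
    rw [abs_abs, one_mul]
    nlinarith [sq_nonneg (|z₂| - 1), sq_abs z₂, sq_nonneg z₁, abs_nonneg z₂]

lemma niceF_const (k : ℝ) : NiceF (fun _ _ _ => k : ℝ → ℝ → ℝ → ℝ) |k| := by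
  constructor
  · intro y; exact measurable_const
  · intro z₁ z₂ y _
    nlinarith [sq_nonneg z₁, sq_nonneg z₂, abs_nonneg k]

/-- Helper: Eexp of a function of `z₁` alone. -/
lemma Eexp_fun_z₁ (g : ℝ → ℝ) :
    Eexp αc α₂ R (fun z₁ _ _ => g z₁) = ∫ z₁, g z₁ ∂stdGauss := by
  rw [Eexp_eq]
  have h : ∀ z₁ : ℝ, (∫ z₂, EexpInt αc α₂ R (fun z₁ _ _ => g z₁) z₁ z₂ ∂stdGauss) = g z₁ := by
    intro z₁
    have he : (fun z₂ : ℝ => EexpInt αc α₂ R (fun z₁ _ _ => g z₁) z₁ z₂) = fun _ => g z₁ := by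
      funext z₂; unfold EexpInt; ring
    rw [he]
    simp
  simp only [h]

end Specific

/-! ### Key estimates -/

section Estimates
variable (αc α₂ R σ ξ γ : ℝ)

lemma EexpInt_Frho_taylor (z₁ z₂ : ℝ) :
    EexpInt αc α₂ R (Frho α₂ R σ ξ) z₁ z₂ ≤
      EexpInt αc α₂ R (Frho α₂ R 0 ξ) z₁ z₂ +
      ((qfun αc α₂ R z₁ * (rho' (-(ξ * R * Real.sqrt α₂ * z₁)) * (-(σ * Real.sqrt α₂))) +
        (1 - qfun αc α₂ R z₁) * (rho' (ξ * R * Real.sqrt α₂ * z₁) * (σ * Real.sqrt α₂))) * z₂ +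
        (σ * Real.sqrt α₂)^2/8 * z₂^2) := by
  have t1 := rho_taylor (-(ξ * R * Real.sqrt α₂ * z₁)) (-(σ * Real.sqrt α₂ * z₂))
  have t2 := rho_taylor (ξ * R * Real.sqrt α₂ * z₁) (σ * Real.sqrt α₂ * z₂)
  have e1 : -(1 * Vfun α₂ R σ ξ z₁ z₂) =
      -(ξ * R * Real.sqrt α₂ * z₁) + -(σ * Real.sqrt α₂ * z₂) := by unfold Vfun; ring
  have e2 : -((-1 : ℝ) * Vfun α₂ R σ ξ z₁ z₂) =
      ξ * R * Real.sqrt α₂ * z₁ + σ * Real.sqrt α₂ * z₂ := by unfold Vfun; ring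
  have e3 : -(1 * Vfun α₂ R 0 ξ z₁ z₂) = -(ξ * R * Real.sqrt α₂ * z₁) := by unfold Vfun; ring
  have e4 : -((-1 : ℝ) * Vfun α₂ R 0 ξ z₁ z₂) = ξ * R * Real.sqrt α₂ * z₁ := by unfold Vfun; ring
  have hq0 := qfun_nonneg αc α₂ R z₁
  have hq1 := qfun_le_one αc α₂ R z₁
  unfold EexpInt Frho
  rw [e1, e2, e3, e4]
  nlinarith [mul_le_mul_of_nonneg_left t1 hq0,
    mul_le_mul_of_nonneg_left t2 (show (0:ℝ) ≤ 1 - qfun αc α₂ R z₁ by linarith)]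

lemma inner_Frho_taylor (z₁ : ℝ) :
    (∫ z₂, EexpInt αc α₂ R (Frho α₂ R σ ξ) z₁ z₂ ∂stdGauss) ≤
      (∫ z₂, EexpInt αc α₂ R (Frho α₂ R 0 ξ) z₁ z₂ ∂stdGauss) +
        (σ * Real.sqrt α₂)^2/8 * ∫ x, x^2 ∂stdGauss := by
  set D := (qfun αc α₂ R z₁ * (rho' (-(ξ * R * Real.sqrt α₂ * z₁)) * (-(σ * Real.sqrt α₂))) +
        (1 - qfun αc α₂ R z₁) * (rho' (ξ * R * Real.sqrt α₂ * z₁) * (σ * Real.sqrt α₂))) with hD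
  have hi1 : Integrable (fun z₂ : ℝ => D * z₂) stdGauss := integrable_id_stdGauss.const_mul D
  have hi2 : Integrable (fun z₂ : ℝ => (σ * Real.sqrt α₂)^2/8 * z₂^2) stdGauss :=
    integrable_sq_stdGauss.const_mul _
  have hi12 : Integrable (fun z₂ : ℝ => D * z₂ + (σ * Real.sqrt α₂)^2/8 * z₂^2) stdGauss :=
    hi1.add hi2
  have hint : Integrable (fun z₂ => EexpInt αc α₂ R (Frho α₂ R 0 ξ) z₁ z₂ +
      (D * z₂ + (σ * Real.sqrt α₂)^2/8 * z₂^2)) stdGauss :=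
    (niceF_inner_integrable (niceF_Frho α₂ R 0 ξ) z₁).add hi12
  have h1 := integral_mono (niceF_inner_integrable (niceF_Frho α₂ R σ ξ) z₁) hint
    (fun z₂ => EexpInt_Frho_taylor αc α₂ R σ ξ z₁ z₂)
  rw [integral_add (niceF_inner_integrable (niceF_Frho α₂ R 0 ξ) z₁) hi12,
      integral_add hi1 hi2, integral_const_mul, integral_const_mul,
      integral_id_stdGauss, mul_zero] at h1
  linarith

lemma Eexp_Frho_taylor :
    Eexp αc α₂ R (Frho α₂ R σ ξ) ≤ Eexp αc α₂ R (Frho α₂ R 0 ξ) + (σ * Real.sqrt α₂)^2 := by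
  rw [Eexp_eq, Eexp_eq]
  have h1 : ∫ z₁, (∫ z₂, EexpInt αc α₂ R (Frho α₂ R σ ξ) z₁ z₂ ∂stdGauss) ∂stdGauss ≤
      ∫ z₁, ((∫ z₂, EexpInt αc α₂ R (Frho α₂ R 0 ξ) z₁ z₂ ∂stdGauss) +
        (σ * Real.sqrt α₂)^2/8 * ∫ x, x^2 ∂stdGauss) ∂stdGauss :=
    integral_mono (niceF_outer_integrable (niceF_Frho α₂ R σ ξ))
      ((niceF_outer_integrable (niceF_Frho α₂ R 0 ξ)).add (integrable_const _))
      (fun z₁ => inner_Frho_taylor αc α₂ R σ ξ z₁)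
  rw [integral_add (niceF_outer_integrable (niceF_Frho α₂ R 0 ξ)) (integrable_const _),
    integral_const] at h1
  simp only [measure_univ, ENNReal.toReal_one, probReal_univ, smul_eq_mul, one_mul] at h1
  have h2 : (σ * Real.sqrt α₂)^2/8 * ∫ x, x^2 ∂stdGauss ≤ (σ * Real.sqrt α₂)^2 := by
    nlinarith [integral_sq_le_stdGauss, integral_sq_nonneg_stdGauss, sq_nonneg (σ * Real.sqrt α₂)]
  linarith

lemma Eexp_Frho_lip (hs : 0 ≤ σ * Real.sqrt α₂) :
    Eexp αc α₂ R (Frho α₂ R 0 ξ) - (σ * Real.sqrt α₂) * ∫ x, |x| ∂stdGauss ≤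
      Eexp αc α₂ R (Frho α₂ R σ ξ) := by
  have h := Eexp_mono (αc := αc) (α₂ := α₂) (R := R)
    (NiceF.sub_mul (niceF_Frho α₂ R 0 ξ) niceF_abs (σ * Real.sqrt α₂))
    (niceF_Frho α₂ R σ ξ) ?_
  · rw [Eexp_sub_mul (niceF_Frho α₂ R 0 ξ) niceF_abs, Eexp_abs] at h
    exact h
  · intro z₁ z₂ y hy
    have hl := rho_lipschitz (-(y * Vfun α₂ R 0 ξ z₁ z₂)) (-(y * Vfun α₂ R σ ξ z₁ z₂))
    have he : (-(y * Vfun α₂ R 0 ξ z₁ z₂)) - (-(y * Vfun α₂ R σ ξ z₁ z₂)) =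
        y * (σ * Real.sqrt α₂ * z₂) := by unfold Vfun; ring
    have hy1 : |y| = 1 := by rcases hy with rfl | rfl <;> simp
    rw [he, abs_mul, hy1, one_mul, abs_mul, abs_of_nonneg hs] at hl
    have h2 := (abs_le.1 hl).2
    show Frho α₂ R 0 ξ z₁ z₂ y - (σ * Real.sqrt α₂) * |z₂| ≤ Frho α₂ R σ ξ z₁ z₂ y
    unfold Frho
    linarith

lemma Eexp_Frhosq_lip (hs : 0 ≤ σ * Real.sqrt α₂) :
    Eexp αc α₂ R (Frhosq α₂ R 0 ξ) - (σ * Real.sqrt α₂)/2 * ∫ x, |x| ∂stdGauss ≤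
      Eexp αc α₂ R (Frhosq α₂ R σ ξ) := by
  have h := Eexp_mono (αc := αc) (α₂ := α₂) (R := R)
    (NiceF.sub_mul (niceF_Frhosq α₂ R 0 ξ) niceF_abs ((σ * Real.sqrt α₂)/2))
    (niceF_Frhosq α₂ R σ ξ) ?_
  · rw [Eexp_sub_mul (niceF_Frhosq α₂ R 0 ξ) niceF_abs, Eexp_abs] at h
    exact h
  · intro z₁ z₂ y hy
    have hl := rho'_sq_lipschitz (-(y * Vfun α₂ R 0 ξ z₁ z₂)) (-(y * Vfun α₂ R σ ξ z₁ z₂))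
    have he : (-(y * Vfun α₂ R 0 ξ z₁ z₂)) - (-(y * Vfun α₂ R σ ξ z₁ z₂)) =
        y * (σ * Real.sqrt α₂ * z₂) := by unfold Vfun; ring
    have hy1 : |y| = 1 := by rcases hy with rfl | rfl <;> simp
    rw [he, abs_mul, hy1, one_mul, abs_mul, abs_of_nonneg hs] at hl
    have h2 := (abs_le.1 hl).2
    show Frhosq α₂ R 0 ξ z₁ z₂ y - (σ * Real.sqrt α₂)/2 * |z₂| ≤ Frhosq α₂ R σ ξ z₁ z₂ y
    unfold Frhosq
    linarith

lemma Eexp_Frhosq_zero_lower (Abd : ℝ) (hA : |ξ * R * Real.sqrt α₂| ≤ Abd) :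
    Real.exp (-(8*Abd))/8 ≤ Eexp αc α₂ R (Frhosq α₂ R 0 ξ) := by
  set e := Real.exp (-(8*Abd)) with he
  have hepos : 0 < e := Real.exp_pos _
  have hAnn : 0 ≤ Abd := le_trans (abs_nonneg _) hA
  have hpt : ∀ z₁ z₂ y : ℝ, (y = 1 ∨ y = -1) →
      e/4 - e/64 * z₁^2 ≤ Frhosq α₂ R 0 ξ z₁ z₂ y := by
    intro z₁ z₂ y hy
    unfold Frhosq
    set t := -(y * Vfun α₂ R 0 ξ z₁ z₂) with ht
    have h1 : Real.exp (-(2*|t|))/4 ≤ rho' t ^ 2 := by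
      have h2 := rho'_ge t
      have h3 : (Real.exp (-|t|)/2)^2 ≤ rho' t ^2 :=
        pow_le_pow_left₀ (by positivity) h2 2
      have h4 : (Real.exp (-|t|))^2 = Real.exp (-(2*|t|)) := by
        rw [sq, ← Real.exp_add]
        congr 1
        ring
      calc Real.exp (-(2*|t|))/4 = (Real.exp (-|t|)/2)^2 := by rw [div_pow, h4]; norm_num
        _ ≤ rho' t ^ 2 := h3
    have h5 : |t| ≤ Abd * |z₁| := by
      rw [ht, abs_y_vfun hy]
      have hv : Vfun α₂ R 0 ξ z₁ z₂ = (ξ * R * Real.sqrt α₂) * z₁ := by unfold Vfun; ring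
      rw [hv, abs_mul]
      exact mul_le_mul_of_nonneg_right hA (abs_nonneg z₁)
    rcases le_or_gt |z₁| 4 with hz | hz
    · have h6 : 2*|t| ≤ 8*Abd := by nlinarith [abs_nonneg z₁, abs_nonneg t]
      have h7 : e ≤ Real.exp (-(2*|t|)) := by
        rw [he]; exact Real.exp_le_exp.2 (by linarith)
      have h8 : e/4 - e/64*z₁^2 ≤ e/4 := by nlinarith [sq_nonneg z₁]
      linarith
    · have hz4 : (16:ℝ) < z₁^2 := by nlinarith [sq_abs z₁, abs_nonneg z₁]
      have h9 : e/4 - e/64*z₁^2 ≤ 0 := by nlinarith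
      have h10 : (0:ℝ) ≤ rho' t ^ 2 := sq_nonneg _
      linarith
  have hg : NiceF (fun z₁ _ _ => e/4 - e/64 * z₁^2 : ℝ → ℝ → ℝ → ℝ) e := by
    constructor
    · intro y; fun_prop
    · intro z₁ z₂ y _
      show |e/4 - e/64 * z₁^2| ≤ e * (1 + z₁^2 + z₂^2)
      rw [sub_eq_add_neg]
      refine (abs_add_le _ _).trans ?_
      rw [abs_neg, abs_of_nonneg (by positivity : (0:ℝ) ≤ e/4),
        abs_of_nonneg (by positivity : (0:ℝ) ≤ e/64 * z₁^2)]
      nlinarith [sq_nonneg z₁, sq_nonneg z₂]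
  have h10 := Eexp_mono (αc := αc) (α₂ := α₂) (R := R) hg (niceF_Frhosq α₂ R 0 ξ) hpt
  have h12 : Eexp αc α₂ R (fun z₁ _ _ => e/4 - e/64 * z₁^2) =
      ∫ z₁, (e/4 - e/64 * z₁^2) ∂stdGauss := Eexp_fun_z₁ αc α₂ R _
  rw [h12] at h10
  have h11 : ∫ z₁, (e/4 - e/64 * z₁^2) ∂stdGauss = e/4 - e/64 * ∫ x, x^2 ∂stdGauss := by
    rw [integral_sub (integrable_const _) (integrable_sq_stdGauss.const_mul _), integral_const_mul]
    simp
  rw [h11] at h10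
  nlinarith [integral_sq_le_stdGauss, integral_sq_nonneg_stdGauss]

lemma Eexp_Fmor_ge (hγ : 0 < γ) :
    Eexp αc α₂ R (Frho α₂ R σ ξ) - 1/(2*γ) ≤ Eexp αc α₂ R (Fmor α₂ R σ ξ γ) := by
  have h := Eexp_mono (αc := αc) (α₂ := α₂) (R := R)
    (NiceF.sub_mul (niceF_Frho α₂ R σ ξ) (niceF_const 1) (1/(2*γ)))
    (niceF_Fmor α₂ R σ ξ γ hγ.le) ?_
  · rw [Eexp_sub_mul (niceF_Frho α₂ R σ ξ) (niceF_const 1), Eexp_const] at h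
    simpa using h
  · intro z₁ z₂ y hy
    have h1 := mor_ge γ y (Vfun α₂ R σ ξ z₁ z₂) hγ hy
    show Frho α₂ R σ ξ z₁ z₂ y - 1/(2*γ) * 1 ≤ Fmor α₂ R σ ξ γ z₁ z₂ y
    unfold Frho Fmor
    linarith

lemma Eexp_Fmor_le_rho (hγ : 0 ≤ γ) :
    Eexp αc α₂ R (Fmor α₂ R σ ξ γ) ≤ Eexp αc α₂ R (Frho α₂ R σ ξ) :=
  Eexp_mono (niceF_Fmor α₂ R σ ξ γ hγ) (niceF_Frho α₂ R σ ξ)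
    (fun z₁ z₂ y _ => mor_le_rho γ y (Vfun α₂ R σ ξ z₁ z₂) hγ)

lemma Eexp_Fmor_le_taylor (hγ : 0 ≤ γ) :
    Eexp αc α₂ R (Fmor α₂ R σ ξ γ) ≤
      Eexp αc α₂ R (Frho α₂ R σ ξ) - 1/(2*(γ+4⁻¹)) * Eexp αc α₂ R (Frhosq α₂ R σ ξ) := by
  rw [← Eexp_sub_mul (niceF_Frho α₂ R σ ξ) (niceF_Frhosq α₂ R σ ξ) (1/(2*(γ+4⁻¹)))]
  apply Eexp_mono (niceF_Fmor α₂ R σ ξ γ hγ)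
    (NiceF.sub_mul (niceF_Frho α₂ R σ ξ) (niceF_Frhosq α₂ R σ ξ) _)
  intro z₁ z₂ y hy
  have h := mor_le_taylor γ y (Vfun α₂ R σ ξ z₁ z₂) hγ hy
  show Fmor α₂ R σ ξ γ z₁ z₂ y ≤
    Frho α₂ R σ ξ z₁ z₂ y - 1/(2*(γ+4⁻¹)) * Frhosq α₂ R σ ξ z₁ z₂ y
  unfold Fmor Frho Frhosq
  have h2 : rho' (-(y * Vfun α₂ R σ ξ z₁ z₂))^2 / (2*(γ+4⁻¹)) =
      1/(2*(γ+4⁻¹)) * rho' (-(y * Vfun α₂ R σ ξ z₁ z₂))^2 := by ring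
  linarith

end Estimates

lemma Lasym_eq (lam δ αc α₂ R σ ξ γ : ℝ) :
    Lasym lam δ αc α₂ R σ ξ γ = lam * (σ^2 + ξ^2*R^2)/2 - α₂*γ*σ^2/(2*δ) +
      Eexp αc α₂ R (Fmor α₂ R σ ξ γ) := rfl

lemma amgm_key {b B σ t : ℝ} (hb : 0 < b) (hB : 0 ≤ B) (hσ : 0 ≤ σ) (ht : 0 < t) :
    σ * Real.sqrt (2*b*B) ≤ b*t*σ^2 + B/(2*t) := by
  have h1 : Real.sqrt (b*t) * Real.sqrt (B/(2*t)) = Real.sqrt (b*B/2) := by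
    rw [← Real.sqrt_mul (by positivity)]
    congr 1
    field_simp
  have h2 : Real.sqrt (2*b*B) = 2 * Real.sqrt (b*B/2) := by
    rw [show (2*b*B) = 2^2 * (b*B/2) by ring, Real.sqrt_mul (by norm_num), Real.sqrt_sq
      (by norm_num : (0:ℝ) ≤ 2)]
  have h3 := sq_nonneg (Real.sqrt (b*t) * σ - Real.sqrt (B/(2*t)))
  have h4 : Real.sqrt (b*t)^2 = b*t := Real.sq_sqrt (by positivity)
  have h5 : Real.sqrt (B/(2*t))^2 = B/(2*t) := Real.sq_sqrt (by positivity)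
  nlinarith [h3, h4, h5, h1, h2, Real.sqrt_nonneg (b*B/2)]

set_option maxHeartbeats 2000000 in
/-- (Lemma 8(d)) Every minimizer over `σ ∈ [0, ∞)` of
`σ ↦ sup_{γ ≥ 0} L(σ, ξ, γ)` is bounded below by a positive constant `c'_M`, uniformly over
`ξ ∈ [−M, M]`. -/
theorem statement16 (K₁ K₂ M : ℝ) (hK₁ : 0 < K₁) (hK : K₁ ≤ K₂) (hM : 0 < M) :
    ∃ c' : ℝ, 0 < c' ∧
      ∀ lam δ R αc α₂ : ℝ, Assump1 K₁ K₂ δ R αc α₂ → lam ∈ Icc K₁ K₂ →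
      ∀ ξ ∈ Icc (-M) M, ∀ σstar : ℝ, 0 ≤ σstar →
        IsMinOn (fun σ : ℝ => ⨆ γ : Ici (0 : ℝ), Lasym lam δ αc α₂ R σ ξ γ)
          (Ici (0 : ℝ)) σstar →
        c' ≤ σstar := by
  have hK₂ : 0 < K₂ := lt_of_lt_of_le hK₁ hK
  set Abd := M * K₂ * Real.sqrt K₂ with hAbd
  set m₀ := Real.exp (-(8*Abd))/8 with hm₀
  set b₁ := K₁/(2*K₂) with hb₁
  set b₂ := K₂/(2*K₁) with hb₂
  set s₁ := Real.sqrt (b₁ * m₀) with hs₁def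
  set C₂ := K₂/2 + K₂ + b₂/4 with hC₂
  have hm₀pos : 0 < m₀ := by rw [hm₀]; positivity
  have hb₁pos : 0 < b₁ := by rw [hb₁]; positivity
  have hb₂pos : 0 < b₂ := by rw [hb₂]; positivity
  have hs₁pos : 0 < s₁ := by rw [hs₁def]; exact Real.sqrt_pos.2 (by positivity)
  have hC₂pos : 0 < C₂ := by rw [hC₂]; positivity
  have hsqK₂ : 0 ≤ Real.sqrt K₂ := Real.sqrt_nonneg _
  set σ₀ := min 1 (min (m₀/(10 * Real.sqrt K₂ + 1)) (s₁/(2*C₂+1))) with hσ₀def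
  have hσ₀pos : 0 < σ₀ := by
    rw [hσ₀def]
    exact lt_min one_pos (lt_min (by positivity) (by positivity))
  have hσ₀le2 : σ₀ ≤ m₀/(10 * Real.sqrt K₂ + 1) := (min_le_right _ _).trans (min_le_left _ _)
  have hσ₀le3 : σ₀ ≤ s₁/(2*C₂+1) := (min_le_right _ _).trans (min_le_right _ _)
  set G := σ₀ * s₁ / 2 with hGdef
  have hGpos : 0 < G := by rw [hGdef]; positivity
  set c' := min σ₀ (G/(2*(5 * Real.sqrt K₂ + b₂ + 1))) with hc'def
  have hc'pos : 0 < c' := lt_min hσ₀pos (by positivity)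
  have hc'le : c' * (2*(5 * Real.sqrt K₂ + b₂ + 1)) ≤ G := by
    have h := (min_le_right σ₀ (G/(2*(5 * Real.sqrt K₂ + b₂ + 1))))
    rw [← hc'def] at h
    rw [← le_div_iff₀ (by positivity)]
    exact h
  refine ⟨c', hc'pos, ?_⟩
  intro lam δ R αc α₂ hass hlam ξ hξ σstar hσstar hmin
  obtain ⟨-, -, hδm, hRm, hαcm, hα₂m, hαcs⟩ := hass
  have hδpos : 0 < δ := lt_of_lt_of_le hK₁ hδm.1
  have hα₂pos : 0 < α₂ := lt_of_lt_of_le hK₁ hα₂m.1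
  have hRpos : 0 < R := lt_of_lt_of_le hK₁ hRm.1
  have hlampos : 0 < lam := lt_of_lt_of_le hK₁ hlam.1
  have hsα : Real.sqrt α₂ ≤ Real.sqrt K₂ := Real.sqrt_le_sqrt hα₂m.2
  have hsαnn : 0 ≤ Real.sqrt α₂ := Real.sqrt_nonneg _
  have hξM : |ξ| ≤ M := abs_le.2 ⟨hξ.1, hξ.2⟩
  have hAok : |ξ * R * Real.sqrt α₂| ≤ Abd := by
    rw [hAbd, abs_mul, abs_mul, abs_of_pos hRpos, abs_of_nonneg hsαnn]
    have h1 : |ξ| * R ≤ M * K₂ := mul_le_mul hξM hRm.2 hRpos.le hM.le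
    exact mul_le_mul h1 hsα hsαnn (by positivity)
  set b := α₂/(2*δ) with hbdef
  have hbpos : 0 < b := by rw [hbdef]; positivity
  have hb_lb : b₁ ≤ b := by
    rw [hbdef, hb₁, div_le_div_iff₀ (by positivity) (by positivity)]
    nlinarith only [hα₂m.1, hδm.2, hK₁, hK₂, hδpos]
  have hb_ub : b ≤ b₂ := by
    rw [hbdef, hb₂, div_le_div_iff₀ (by positivity) (by positivity)]
    nlinarith only [hα₂m.2, hδm.1, hK₁, hK₂, hδpos, hα₂pos]
  set I₁ := ∫ x, |x| ∂stdGauss with hI₁def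
  have hI₁nn : 0 ≤ I₁ := integral_abs_nonneg_stdGauss
  have hI₁5 : I₁ ≤ 5 := integral_abs_le_stdGauss
  set A0 := Eexp αc α₂ R (Frho α₂ R 0 ξ) with hA0def
  set B0 := Eexp αc α₂ R (Frhosq α₂ R 0 ξ) with hB0def
  have hB0m : m₀ ≤ B0 := by
    rw [hB0def, hm₀]
    exact Eexp_Frhosq_zero_lower αc α₂ R ξ Abd hAok
  clear_value Abd m₀ b₁ b₂ s₁ C₂ σ₀ G c' b I₁ A0 B0
  set f : ℝ → ℝ := fun σ => ⨆ γ : Ici (0 : ℝ), Lasym lam δ αc α₂ R σ ξ γ with hfdef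
  haveI : Nonempty (Ici (0:ℝ)) := ⟨⟨0, mem_Ici.mpr (le_refl 0)⟩⟩
  have hub : ∀ σ γ : ℝ, 0 ≤ σ → 0 ≤ γ → Lasym lam δ αc α₂ R σ ξ γ ≤
      lam * (σ^2 + ξ^2*R^2)/2 + Eexp αc α₂ R (Frho α₂ R σ ξ) := by
    intro σ γ hσ hγ
    rw [Lasym_eq]
    have h1 := Eexp_Fmor_le_rho αc α₂ R σ ξ γ hγ
    have h2 : 0 ≤ α₂*γ*σ^2/(2*δ) := by positivity
    linarith only [h1, h2]
  have hbdd : ∀ σ : ℝ, 0 ≤ σ →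
      BddAbove (range fun γ : Ici (0:ℝ) => Lasym lam δ αc α₂ R σ ξ γ) := by
    intro σ hσ
    refine ⟨lam * (σ^2 + ξ^2*R^2)/2 + Eexp αc α₂ R (Frho α₂ R σ ξ), ?_⟩
    rintro x ⟨⟨γ, hγ⟩, rfl⟩
    exact hub σ γ hσ hγ
  by_contra hcon
  push_neg at hcon
  -- Step 2 preparation
  have hBσ₀ : m₀/2 ≤ Eexp αc α₂ R (Frhosq α₂ R σ₀ ξ) := by
    have h1 := Eexp_Frhosq_lip αc α₂ R σ₀ ξ (mul_nonneg hσ₀pos.le hsαnn)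
    rw [← hB0def, ← hI₁def] at h1
    have h2 : σ₀ * (10 * Real.sqrt K₂ + 1) ≤ m₀ := by
      rw [le_div_iff₀ (by positivity)] at hσ₀le2
      exact hσ₀le2
    have h3 : (σ₀ * Real.sqrt α₂)/2 * I₁ ≤ m₀/2 := by
      linarith only [h2, hσ₀pos.le, mul_nonneg (mul_nonneg hσ₀pos.le hsαnn) hI₁nn,
        mul_nonneg (mul_nonneg hσ₀pos.le hsαnn) (show (0:ℝ) ≤ 5 - I₁ by linarith only [hI₁5]),
        mul_nonneg hσ₀pos.le (sub_nonneg.2 hsα),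
        mul_nonneg hσ₀pos.le hsqK₂]
    linarith only [h1, h3, hB0m]
  -- Step 2 : upper bound of f σ₀
  have hstep2 : f σ₀ ≤ lam * (ξ^2*R^2)/2 + A0 - G := by
    show (⨆ γ : Ici (0:ℝ), Lasym lam δ αc α₂ R σ₀ ξ γ) ≤ _
    apply ciSup_le
    rintro ⟨γ, hγ⟩
    show Lasym lam δ αc α₂ R σ₀ ξ γ ≤ _
    rw [Lasym_eq]
    have h1 := Eexp_Fmor_le_taylor αc α₂ R σ₀ ξ γ hγ
    have h2 := Eexp_Frho_taylor αc α₂ R σ₀ ξ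
    rw [← hA0def] at h2
    have ht : (0:ℝ) < γ + 4⁻¹ := by have hγ' := mem_Ici.mp hγ; linarith only [hγ']
    have hBnn : 0 ≤ Eexp αc α₂ R (Frhosq α₂ R σ₀ ξ) := le_trans (by linarith only [hm₀pos]) hBσ₀
    have h3 := amgm_key hbpos hBnn hσ₀pos.le ht
    have h4 : s₁ ≤ Real.sqrt (2*b*(Eexp αc α₂ R (Frhosq α₂ R σ₀ ξ))) := by
      rw [hs₁def]
      apply Real.sqrt_le_sqrt
      linarith only [mul_nonneg (sub_nonneg.2 hb_lb) hBnn,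
        mul_nonneg hb₁pos.le (sub_nonneg.2 hBσ₀)]
    have h5 : 1/(2*(γ+4⁻¹)) * (Eexp αc α₂ R (Frhosq α₂ R σ₀ ξ)) =
        (Eexp αc α₂ R (Frhosq α₂ R σ₀ ξ))/(2*(γ+4⁻¹)) := by ring
    have h6 : α₂*γ*σ₀^2/(2*δ) = b*γ*σ₀^2 := by
      rw [hbdef]
      field_simp
    have h7 : σ₀ * s₁ ≤ b*(γ+4⁻¹)*σ₀^2 +
        (Eexp αc α₂ R (Frhosq α₂ R σ₀ ξ))/(2*(γ+4⁻¹)) := by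
      have h7a := mul_le_mul_of_nonneg_left h4 hσ₀pos.le
      linarith only [h7a, h3]
    have h8 : (σ₀*Real.sqrt α₂)^2 ≤ σ₀^2 * K₂ := by
      rw [mul_pow, Real.sq_sqrt hα₂pos.le]
      exact mul_le_mul_of_nonneg_left hα₂m.2 (sq_nonneg σ₀)
    have h9 : lam/2 + K₂ + b/4 ≤ C₂ := by
      rw [hC₂]
      linarith only [hlam.2, hb_ub]
    have h10 : σ₀ * C₂ ≤ s₁/2 := by
      rw [le_div_iff₀ (by linarith only [hC₂pos] : (0:ℝ) < 2*C₂+1)] at hσ₀le3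
      linarith only [hσ₀le3, hσ₀pos.le]
    have h11 : σ₀^2*(lam/2 + K₂ + b/4) ≤ σ₀^2 * C₂ :=
      mul_le_mul_of_nonneg_left h9 (sq_nonneg σ₀)
    have h12 : σ₀^2 * C₂ ≤ σ₀ * (s₁/2) := by
      have he : σ₀^2 * C₂ = σ₀ * (σ₀ * C₂) := by ring
      rw [he]
      exact mul_le_mul_of_nonneg_left h10 hσ₀pos.le
    rw [h6, hGdef]
    linarith only [h1, h2, h7, h8, h11, h12, h5]
  -- Step 1 : lower bound of f σstar
  have hγ₀ : (0:ℝ) < 1/c' := one_div_pos.mpr hc'pos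
  have hstep1 : lam * (ξ^2*R^2)/2 + A0 - G/2 ≤ f σstar := by
    have h0 : Lasym lam δ αc α₂ R σstar ξ (1/c') ≤ f σstar :=
      le_ciSup (hbdd σstar hσstar) ⟨1/c', hγ₀.le⟩
    rw [Lasym_eq] at h0
    have h1 := Eexp_Fmor_ge αc α₂ R σstar ξ (1/c') hγ₀
    have h2 := Eexp_Frho_lip αc α₂ R σstar ξ (mul_nonneg hσstar hsαnn)
    rw [← hA0def, ← hI₁def] at h2
    have h3 : α₂*(1/c')*σstar^2/(2*δ) ≤ b₂ * c' := by
      have e1 : α₂*(1/c')*σstar^2/(2*δ) = b*σstar^2/c' := by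
        rw [hbdef]
        field_simp
      rw [e1, div_le_iff₀ hc'pos]
      have h4 : σstar^2 ≤ c'^2 := by nlinarith only [hσstar, hcon.le, hc'pos.le]
      linarith only [mul_nonneg (sub_nonneg.2 hb_ub) (sq_nonneg σstar),
        mul_nonneg hb₂pos.le (show (0:ℝ) ≤ c'^2 - σstar^2 by linarith only [h4])]
    have e2 : 1/(2*(1/c')) = c'/2 := by
      field_simp
    rw [e2] at h1
    have h5 : σstar*Real.sqrt α₂*I₁ ≤ 5*Real.sqrt K₂*c' := by
      linarith only [mul_nonneg (mul_nonneg hσstar hsαnn) hI₁nn,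
        mul_nonneg (mul_nonneg hσstar hsαnn) (show (0:ℝ) ≤ 5 - I₁ by linarith only [hI₁5]),
        mul_nonneg hσstar (sub_nonneg.2 hsα),
        mul_nonneg hσstar hsqK₂, hcon.le, hsqK₂, hc'pos.le,
        mul_nonneg (sub_nonneg.2 hcon.le) hsqK₂]
    have h6 : 0 ≤ lam * σstar^2/2 := by positivity
    have h7 : c'*(b₂ + 5*Real.sqrt K₂ + 1/2) ≤ G/2 := by linarith only [hc'le, hc'pos.le]
    linarith only [h0, h1, h2, h3, h5, h6, h7]
  have hmin2 : f σstar ≤ f σ₀ := hmin (mem_Ici.mpr hσ₀pos.le)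
  linarith only [hstep1, hstep2, hmin2, hGpos]


end
end

section
/- Under Assumption 1, for every M > 0 and every pair of constants 0 < L₁ ≤ U₁, there exists a constant C > 0, depending only on K₁, K₂, M, L₁, and U₁, such that the asymptotic loss L is C-Lipschitz with respect to the Euclidean norm on the set 𝒞 = {(σ, ξ, γ) ∈ ℝ³ : σ ∈ [0, M], ξ ∈ [−M, M], γ ∈ [L₁, U₁]}. -/
open MeasureTheory ProbabilityTheory Real Set
open scoped BigOperators ENNReal NNReal

noncomputable section
namespace Stmt17

lemma rho_nonneg (t : ℝ) : 0 ≤ rho t :=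
  Real.log_nonneg (by nlinarith [Real.exp_pos t])

lemma rho_zero : rho 0 = Real.log 2 := by
  unfold rho; rw [Real.exp_zero]; norm_num

lemma rho_le_add (s t : ℝ) : rho s ≤ rho t + |s - t| := by
  rcases le_total s t with h | h
  · have h1 : rho s ≤ rho t := by
      unfold rho
      exact Real.log_le_log (by positivity) (by linarith [Real.exp_le_exp.2 h])
    have := abs_nonneg (s - t); linarith
  · rw [abs_of_nonneg (by linarith : (0:ℝ) ≤ s - t)]
    unfold rho
    have h2 : 1 ≤ Real.exp (s - t) := Real.one_le_exp (by linarith)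
    have h3 : Real.exp (s - t) * Real.exp t = Real.exp s := by
      rw [← Real.exp_add]; ring_nf
    have h1 : 1 + Real.exp s ≤ Real.exp (s - t) * (1 + Real.exp t) := by nlinarith
    calc Real.log (1 + Real.exp s) ≤ Real.log (Real.exp (s - t) * (1 + Real.exp t)) :=
          Real.log_le_log (by positivity) h1
      _ = (s - t) + Real.log (1 + Real.exp t) := by
          rw [Real.log_mul (Real.exp_ne_zero _) (by positivity), Real.log_exp]
      _ = Real.log (1 + Real.exp t) + (s - t) := by ring

def gme (γ y v : ℝ) : ℝ := ⨅ u : ℝ, (rho (-(y * u)) + γ / 2 * (u - v) ^ 2)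

lemma gme_bdd (hγ : 0 ≤ γ) (y v : ℝ) :
    BddBelow (Set.range fun u : ℝ => rho (-(y * u)) + γ / 2 * (u - v) ^ 2) := by
  refine ⟨0, ?_⟩
  rintro x ⟨u, rfl⟩
  exact add_nonneg (rho_nonneg _) (by positivity)

lemma gme_le_at (hγ : 0 ≤ γ) (y v u : ℝ) :
    gme γ y v ≤ rho (-(y * u)) + γ / 2 * (u - v) ^ 2 :=
  ciInf_le (gme_bdd hγ y v) u

lemma gme_nonneg (hγ : 0 ≤ γ) (y v : ℝ) : 0 ≤ gme γ y v :=
  le_ciInf fun u => add_nonneg (rho_nonneg _) (by positivity)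

lemma gme_le (hγ : 0 ≤ γ) (y v : ℝ) : gme γ y v ≤ Real.log 2 + γ / 2 * v ^ 2 := by
  have h := gme_le_at hγ y v 0
  have h2 : (0 - v) ^ 2 = v ^ 2 := by ring
  rw [mul_zero, neg_zero, rho_zero, h2] at h
  exact h

lemma gme_lip (hγ : 0 ≤ γ) {y : ℝ} (hy : |y| = 1) (v w : ℝ) :
    gme γ y v ≤ gme γ y w + |v - w| := by
  have key : gme γ y v - |v - w| ≤ gme γ y w := by
    apply le_ciInf
    intro u
    rw [sub_le_iff_le_add]
    have h2 : rho (-(y * (u + (v - w)))) ≤ rho (-(y * u)) + |v - w| := by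
      have h3 := rho_le_add (-(y * (u + (v - w)))) (-(y * u))
      have h4 : (-(y * (u + (v - w)))) - (-(y * u)) = -(y * (v - w)) := by ring
      rw [h4, abs_neg, abs_mul, hy, one_mul] at h3
      exact h3
    calc gme γ y v ≤ rho (-(y * (u + (v - w)))) + γ / 2 * ((u + (v - w)) - v) ^ 2 :=
          gme_le_at hγ y v (u + (v - w))
      _ = rho (-(y * (u + (v - w)))) + γ / 2 * (u - w) ^ 2 := by ring_nf
      _ ≤ (rho (-(y * u)) + γ / 2 * (u - w) ^ 2) + |v - w| := by linarith
  linarith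

lemma gme_abs_lip (hγ : 0 ≤ γ) {y : ℝ} (hy : |y| = 1) (v w : ℝ) :
    |gme γ y v - gme γ y w| ≤ |v - w| := by
  rw [abs_sub_le_iff]
  constructor
  · linarith [gme_lip hγ hy v w]
  · have := gme_lip hγ hy w v
    rw [abs_sub_comm] at this
    linarith

lemma gme_cont (hγ : 0 ≤ γ) {y : ℝ} (hy : |y| = 1) : Continuous fun v => gme γ y v := by
  have h : LipschitzWith 1 fun v => gme γ y v := by
    apply LipschitzWith.of_dist_le_mul
    intro v w
    simp only [NNReal.coe_one, one_mul, Real.dist_eq]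
    exact gme_abs_lip hγ hy v w
  exact h.continuous

lemma gme_mono (hγ : 0 ≤ γ) (h : γ ≤ γ') (y v : ℝ) : gme γ y v ≤ gme γ' y v := by
  apply le_ciInf
  intro u
  have h1 := gme_le_at hγ y v u
  nlinarith [sq_nonneg (u - v)]

lemma gme_gamma_ub {L₁ γ γ' y v : ℝ} (hL : 0 < L₁) (hγ : L₁ ≤ γ) (h : γ ≤ γ') :
    gme γ' y v ≤ gme γ y v + (γ' - γ) * (Real.log 2 / L₁ + v ^ 2 / 2) := by
  have hγ0 : 0 < γ := lt_of_lt_of_le hL hγ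
  refine _root_.le_of_forall_pos_le_add fun δ hδ => ?_
  have hCf0 : (0:ℝ) < 1 + (γ' - γ) / L₁ := by
    have : 0 ≤ (γ' - γ) / L₁ := div_nonneg (by linarith) hL.le
    linarith
  set ε : ℝ := δ / (1 + (γ' - γ) / L₁) with hε
  have hε0 : 0 < ε := div_pos hδ hCf0
  have hlt : gme γ y v < gme γ y v + ε := by linarith
  obtain ⟨u, hu⟩ := exists_lt_of_ciInf_lt hlt
  have hG := gme_le hγ0.le y v
  have hr := rho_nonneg (-(y * u))
  have hs0 : (0:ℝ) ≤ (u - v) ^ 2 := sq_nonneg _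
  have hlog : 0 ≤ Real.log 2 := Real.log_nonneg one_le_two
  have hls : γ * (u - v) ^ 2 ≤ 2 * Real.log 2 + γ * v ^ 2 + 2 * ε := by nlinarith
  have hs : (u - v) ^ 2 ≤ 2 * (Real.log 2 / L₁) + v ^ 2 + 2 * (ε / L₁) := by
    have d1 : Real.log 2 / L₁ * L₁ = Real.log 2 := div_mul_cancel₀ _ hL.ne'
    have d2 : ε / L₁ * L₁ = ε := div_mul_cancel₀ _ hL.ne'
    have ha : 0 ≤ Real.log 2 / L₁ := by positivity
    have hb : 0 ≤ ε / L₁ := by positivity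
    nlinarith [mul_nonneg ha (sub_nonneg.2 hγ), mul_nonneg hb (sub_nonneg.2 hγ)]
  have hfin : gme γ' y v ≤ rho (-(y * u)) + γ' / 2 * (u - v) ^ 2 :=
    gme_le_at (by linarith) y v u
  have hmul : (γ' - γ) * (u - v) ^ 2
      ≤ (γ' - γ) * (2 * (Real.log 2 / L₁) + v ^ 2 + 2 * (ε / L₁)) :=
    mul_le_mul_of_nonneg_left hs (by linarith)
  have hδε : δ = (1 + (γ' - γ) / L₁) * ε := by
    rw [hε, mul_comm, div_mul_cancel₀ δ (ne_of_gt hCf0)]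
  rw [hδε]
  have heq : (γ' - γ) / L₁ * ε = (γ' - γ) * (ε / L₁) := by ring
  nlinarith [hfin, hu, hmul, heq]

lemma gme_gamma_lip {L₁ U₁ γ γ' y v : ℝ} (hL : 0 < L₁) (hγ : γ ∈ Icc L₁ U₁)
    (hγ' : γ' ∈ Icc L₁ U₁) :
    |gme γ y v - gme γ' y v| ≤ |γ - γ'| * (Real.log 2 / L₁ + v ^ 2 / 2) := by
  have hlog : 0 ≤ Real.log 2 := Real.log_nonneg one_le_two
  rcases le_total γ γ' with h | h
  · have h1 := gme_mono (by linarith [hγ.1] : (0:ℝ) ≤ γ) h y v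
    have h2 := gme_gamma_ub hL hγ.1 h (y := y) (v := v)
    rw [abs_of_nonpos (by linarith), abs_of_nonpos (by linarith)]
    nlinarith
  · have h1 := gme_mono (by linarith [hγ'.1] : (0:ℝ) ≤ γ') h y v
    have h2 := gme_gamma_ub hL hγ'.1 h (y := y) (v := v)
    rw [abs_of_nonneg (by linarith), abs_of_nonneg (by linarith)]
    nlinarith

end Stmt17


namespace Stmt17

instance : IsProbabilityMeasure stdGauss := by
  unfold stdGauss; infer_instance

def phi (z : ℝ) : ℝ := 1 + |z| + z ^ 2

lemma one_le_phi (z : ℝ) : 1 ≤ phi z := by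
  unfold phi; nlinarith [abs_nonneg z, sq_nonneg z]

lemma phi_nonneg (z : ℝ) : 0 ≤ phi z := le_trans zero_le_one (one_le_phi z)

lemma sq_le_phi (z : ℝ) : z ^ 2 ≤ phi z := by
  unfold phi; nlinarith [abs_nonneg z]

lemma abs_le_phi (z : ℝ) : |z| ≤ phi z := by
  unfold phi; nlinarith [sq_nonneg z]

lemma phi_continuous : Continuous phi := by
  unfold phi; fun_prop

lemma one_le_phi_mul (z w : ℝ) : 1 ≤ phi z * phi w := by
  nlinarith [one_le_phi z, one_le_phi w]

lemma sq_le_phi_mul (z w : ℝ) : z ^ 2 ≤ phi z * phi w := by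
  nlinarith [sq_le_phi z, one_le_phi w, phi_nonneg z, sq_nonneg z]

lemma sq_le_phi_mul' (z w : ℝ) : w ^ 2 ≤ phi z * phi w := by
  nlinarith [sq_le_phi w, one_le_phi z, phi_nonneg w, sq_nonneg w]

lemma abs_le_phi_mul (z w : ℝ) : |z| ≤ phi z * phi w := by
  nlinarith [abs_le_phi z, one_le_phi w, phi_nonneg z, abs_nonneg z]

lemma abs_le_phi_mul' (z w : ℝ) : |w| ≤ phi z * phi w := by
  nlinarith [abs_le_phi w, one_le_phi z, phi_nonneg w, abs_nonneg w]

lemma integrable_phi : Integrable phi stdGauss := by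
  have hv : ((1 : ℝ≥0) : ℝ≥0∞) ≠ 0 := by norm_num
  rw [stdGauss, gaussianReal_of_var_ne_zero 0 (by norm_num : (1:ℝ≥0) ≠ 0)]
  rw [integrable_withDensity_iff (measurable_gaussianPDF 0 1)
    (Filter.Eventually.of_forall fun x => ENNReal.ofReal_lt_top)]
  have hpdf : ∀ x : ℝ, ((gaussianPDF 0 1 x).toReal) =
      (Real.sqrt (2 * π))⁻¹ * Real.exp (-(2:ℝ)⁻¹ * x ^ 2) := by
    intro x
    rw [gaussianPDF, ENNReal.toReal_ofReal (gaussianPDFReal_nonneg 0 1 x)]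
    unfold gaussianPDFReal
    have h9 : -(x - 0) ^ 2 / (2 * ((1:ℝ≥0):ℝ)) = -(2:ℝ)⁻¹ * x ^ 2 := by
      push_cast; ring
    rw [h9]
    push_cast
    norm_num
  have h1 : Integrable (fun x : ℝ => Real.exp (-(2:ℝ)⁻¹ * x ^ 2)) :=
    integrable_exp_neg_mul_sq (by norm_num)
  have h2 : Integrable (fun x : ℝ => |x| * Real.exp (-(2:ℝ)⁻¹ * x ^ 2)) := by
    have := (integrable_mul_exp_neg_mul_sq (b := (2:ℝ)⁻¹) (by norm_num)).abs
    refine this.congr (Filter.Eventually.of_forall fun x => ?_)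
    simp [abs_mul, abs_of_pos, Real.exp_pos]
  have h3 : Integrable (fun x : ℝ => x ^ 2 * Real.exp (-(2:ℝ)⁻¹ * x ^ 2)) := by
    have h := integrable_rpow_mul_exp_neg_mul_sq (b := (2:ℝ)⁻¹) (by norm_num)
      (s := 2) (by norm_num)
    refine h.congr (Filter.Eventually.of_forall fun x => ?_)
    norm_num [Real.rpow_natCast]
  have hsum : Integrable (fun x : ℝ =>
      (Real.sqrt (2 * π))⁻¹ * ((1 + |x| + x ^ 2) * Real.exp (-(2:ℝ)⁻¹ * x ^ 2))) := by
    refine Integrable.const_mul ?_ _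
    have := (h1.add h2).add h3
    refine this.congr (Filter.Eventually.of_forall fun x => ?_)
    simp only [Pi.add_apply]
    ring
  refine hsum.congr (Filter.Eventually.of_forall fun x => ?_)
  show (Real.sqrt (2 * π))⁻¹ * ((1 + |x| + x ^ 2) * Real.exp (-(2:ℝ)⁻¹ * x ^ 2))
      = phi x * (gaussianPDF 0 1 x).toReal
  rw [hpdf x]
  unfold phi
  ring

lemma rho'_nonneg (t : ℝ) : 0 ≤ rho' t := by
  unfold rho'; positivity

lemma rho'_le_one (t : ℝ) : rho' t ≤ 1 := by
  unfold rho'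
  rw [div_le_one (by positivity)]
  linarith

lemma rho'_continuous : Continuous rho' := by
  unfold rho'
  exact Real.continuous_exp.div (by fun_prop) (fun t => by positivity)

lemma qfun_nonneg (αc α₂ R z : ℝ) : 0 ≤ qfun αc α₂ R z :=
  integral_nonneg fun g => rho'_nonneg _

lemma qfun_le_one (αc α₂ R z : ℝ) : qfun αc α₂ R z ≤ 1 := by
  unfold qfun
  have hint : Integrable (fun g : ℝ =>
      rho' ((αc / Real.sqrt α₂) * R * z + Real.sqrt (1 - αc ^ 2 / α₂) * R * g)) stdGauss := by
    refine Integrable.mono' (integrable_const 1) ?_ ?_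
    · exact (rho'_continuous.comp (by fun_prop)).aestronglyMeasurable
    · refine Filter.Eventually.of_forall fun g => ?_
      rw [Real.norm_eq_abs, abs_of_nonneg (rho'_nonneg _)]
      exact rho'_le_one _
  calc (∫ g, rho' ((αc / Real.sqrt α₂) * R * z + Real.sqrt (1 - αc ^ 2 / α₂) * R * g) ∂stdGauss)
      ≤ ∫ _, (1:ℝ) ∂stdGauss := integral_mono hint (integrable_const 1) fun g => rho'_le_one _
    _ = 1 := by simp

lemma qfun_stronglyMeasurable (αc α₂ R : ℝ) :
    StronglyMeasurable fun z => qfun αc α₂ R z := by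
  have hc : Continuous fun p : ℝ × ℝ =>
      rho' ((αc / Real.sqrt α₂) * R * p.1 + Real.sqrt (1 - αc ^ 2 / α₂) * R * p.2) :=
    rho'_continuous.comp (by fun_prop)
  exact hc.stronglyMeasurable.integral_prod_right'

end Stmt17

namespace Stmt17

lemma log_two_le_one : Real.log 2 ≤ 1 := by
  have := Real.log_le_sub_one_of_pos (by norm_num : (0:ℝ) < 2)
  linarith

lemma Vsq_bound {K₁ K₂ M α₂ R σ ξ : ℝ}
    (hK₁ : 0 < K₁) (hR : R ∈ Icc K₁ K₂) (hα₂ : α₂ ∈ Icc K₁ K₂)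
    (hσ : σ ∈ Icc 0 M) (hξ : ξ ∈ Icc (-M) M) (z₁ z₂ : ℝ) :
    (Vfun α₂ R σ ξ z₁ z₂) ^ 2 ≤ 2 * (M ^ 2 * K₂ ^ 3 + M ^ 2 * K₂) * (phi z₁ * phi z₂) := by
  have hα₂0 : 0 < α₂ := lt_of_lt_of_le hK₁ hα₂.1
  have hK₂0 : 0 < K₂ := lt_of_lt_of_le hK₁ (le_trans hR.1 hR.2)
  have hs : Real.sqrt α₂ ^ 2 = α₂ := Real.sq_sqrt hα₂0.le
  have hR0 : 0 < R := lt_of_lt_of_le hK₁ hR.1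
  have hM0 : 0 ≤ M := le_trans hσ.1 hσ.2
  have hξ2 : ξ ^ 2 ≤ M ^ 2 := by nlinarith [hξ.1, hξ.2]
  have hσ2 : σ ^ 2 ≤ M ^ 2 := by nlinarith [hσ.1, hσ.2]
  have hR2 : R ^ 2 ≤ K₂ ^ 2 := by nlinarith [hR.1, hR.2]
  have ha2 : (ξ * R * Real.sqrt α₂) ^ 2 ≤ M ^ 2 * K₂ ^ 3 := by
    have e : (ξ * R * Real.sqrt α₂) ^ 2 = ξ ^ 2 * R ^ 2 * α₂ := by
      rw [mul_pow, mul_pow, hs]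
    rw [e]
    have h1 : ξ ^ 2 * R ^ 2 ≤ M ^ 2 * K₂ ^ 2 := by nlinarith [sq_nonneg ξ, sq_nonneg R]
    nlinarith [sq_nonneg ξ, sq_nonneg R, hα₂.2, mul_nonneg (sq_nonneg ξ) (sq_nonneg R)]
  have hb2 : (σ * Real.sqrt α₂) ^ 2 ≤ M ^ 2 * K₂ := by
    have e : (σ * Real.sqrt α₂) ^ 2 = σ ^ 2 * α₂ := by rw [mul_pow, hs]
    rw [e]
    nlinarith [sq_nonneg σ, hα₂.2]
  have hV2 : (Vfun α₂ R σ ξ z₁ z₂) ^ 2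
      ≤ 2 * (ξ * R * Real.sqrt α₂) ^ 2 * z₁ ^ 2 + 2 * (σ * Real.sqrt α₂) ^ 2 * z₂ ^ 2 := by
    unfold Vfun
    nlinarith [sq_nonneg (ξ * R * Real.sqrt α₂ * z₁ - σ * Real.sqrt α₂ * z₂)]
  have hp1 : (ξ * R * Real.sqrt α₂) ^ 2 * z₁ ^ 2 ≤ (M ^ 2 * K₂ ^ 3) * (phi z₁ * phi z₂) :=
    mul_le_mul ha2 (sq_le_phi_mul z₁ z₂) (sq_nonneg _) (by positivity)
  have hp2 : (σ * Real.sqrt α₂) ^ 2 * z₂ ^ 2 ≤ (M ^ 2 * K₂) * (phi z₁ * phi z₂) :=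
    mul_le_mul hb2 (sq_le_phi_mul' z₁ z₂) (sq_nonneg _) (by positivity)
  nlinarith [hp1, hp2]

lemma gmeV_bound {K₁ K₂ M L₁ U₁ α₂ R σ ξ γ y : ℝ}
    (hK₁ : 0 < K₁) (hL₁ : 0 < L₁)
    (hR : R ∈ Icc K₁ K₂) (hα₂ : α₂ ∈ Icc K₁ K₂)
    (hσ : σ ∈ Icc 0 M) (hξ : ξ ∈ Icc (-M) M) (hγ : γ ∈ Icc L₁ U₁) (z₁ z₂ : ℝ) :
    gme γ y (Vfun α₂ R σ ξ z₁ z₂)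
      ≤ (1 + U₁ * (M ^ 2 * K₂ ^ 3 + M ^ 2 * K₂)) * (phi z₁ * phi z₂) := by
  have hγ0 : 0 ≤ γ := le_trans hL₁.le hγ.1
  have hU0 : 0 ≤ U₁ := le_trans (le_trans hL₁.le hγ.1) hγ.2
  have h1 := gme_le hγ0 y (Vfun α₂ R σ ξ z₁ z₂)
  have h2 := Vsq_bound hK₁ hR hα₂ hσ hξ z₁ z₂
  have hφ := one_le_phi_mul z₁ z₂
  have hlog := log_two_le_one
  have hγU : γ ≤ U₁ := hγ.2
  have hV0 : 0 ≤ (Vfun α₂ R σ ξ z₁ z₂) ^ 2 := sq_nonneg _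
  have h3 : γ * (Vfun α₂ R σ ξ z₁ z₂) ^ 2
      ≤ U₁ * (2 * (M ^ 2 * K₂ ^ 3 + M ^ 2 * K₂) * (phi z₁ * phi z₂)) := by
    calc γ * (Vfun α₂ R σ ξ z₁ z₂) ^ 2 ≤ U₁ * (Vfun α₂ R σ ξ z₁ z₂) ^ 2 :=
          mul_le_mul_of_nonneg_right hγU hV0
      _ ≤ U₁ * (2 * (M ^ 2 * K₂ ^ 3 + M ^ 2 * K₂) * (phi z₁ * phi z₂)) :=
          mul_le_mul_of_nonneg_left h2 hU0
  nlinarith [h1, h3, hφ, hlog]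

lemma V_diff_bound {K₁ K₂ α₂ R σ ξ σ' ξ' : ℝ}
    (hK₁ : 0 < K₁) (hR : R ∈ Icc K₁ K₂) (hα₂ : α₂ ∈ Icc K₁ K₂) (z₁ z₂ : ℝ) :
    |Vfun α₂ R σ ξ z₁ z₂ - Vfun α₂ R σ' ξ' z₁ z₂|
      ≤ (K₂ * Real.sqrt K₂ * |ξ - ξ'| + Real.sqrt K₂ * |σ - σ'|) * (phi z₁ * phi z₂) := by
  have hα₂0 : 0 < α₂ := lt_of_lt_of_le hK₁ hα₂.1
  have hK₂0 : 0 < K₂ := lt_of_lt_of_le hK₁ (le_trans hR.1 hR.2)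
  have hR0 : 0 < R := lt_of_lt_of_le hK₁ hR.1
  have hsle : Real.sqrt α₂ ≤ Real.sqrt K₂ := Real.sqrt_le_sqrt hα₂.2
  have hs0 : 0 ≤ Real.sqrt α₂ := Real.sqrt_nonneg _
  have hsK0 : 0 ≤ Real.sqrt K₂ := Real.sqrt_nonneg _
  have he : Vfun α₂ R σ ξ z₁ z₂ - Vfun α₂ R σ' ξ' z₁ z₂
      = (ξ - ξ') * (R * Real.sqrt α₂) * z₁ + (σ - σ') * Real.sqrt α₂ * z₂ := by
    unfold Vfun; ring
  rw [he]
  have hRs : R * Real.sqrt α₂ ≤ K₂ * Real.sqrt K₂ :=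
    mul_le_mul hR.2 hsle hs0 hK₂0.le
  calc |(ξ - ξ') * (R * Real.sqrt α₂) * z₁ + (σ - σ') * Real.sqrt α₂ * z₂|
      ≤ |(ξ - ξ') * (R * Real.sqrt α₂) * z₁| + |(σ - σ') * Real.sqrt α₂ * z₂| := abs_add_le _ _
    _ = |ξ - ξ'| * (R * Real.sqrt α₂) * |z₁| + |σ - σ'| * Real.sqrt α₂ * |z₂| := by
        simp only [abs_mul]
        rw [abs_of_nonneg hR0.le, abs_of_nonneg hs0]
    _ ≤ (K₂ * Real.sqrt K₂ * |ξ - ξ'| + Real.sqrt K₂ * |σ - σ'|) * (phi z₁ * phi z₂) := by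
        have p1 : |ξ - ξ'| * (R * Real.sqrt α₂) * |z₁|
            ≤ |ξ - ξ'| * (K₂ * Real.sqrt K₂) * (phi z₁ * phi z₂) := by
          have hx := mul_le_mul hRs (abs_le_phi_mul z₁ z₂) (abs_nonneg z₁)
            (by positivity : (0:ℝ) ≤ K₂ * Real.sqrt K₂)
          calc |ξ - ξ'| * (R * Real.sqrt α₂) * |z₁|
              = |ξ - ξ'| * ((R * Real.sqrt α₂) * |z₁|) := by ring
            _ ≤ |ξ - ξ'| * ((K₂ * Real.sqrt K₂) * (phi z₁ * phi z₂)) :=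
                mul_le_mul_of_nonneg_left hx (abs_nonneg _)
            _ = |ξ - ξ'| * (K₂ * Real.sqrt K₂) * (phi z₁ * phi z₂) := by ring
        have p2 : |σ - σ'| * Real.sqrt α₂ * |z₂|
            ≤ |σ - σ'| * Real.sqrt K₂ * (phi z₁ * phi z₂) := by
          have hx := mul_le_mul hsle (abs_le_phi_mul' z₁ z₂) (abs_nonneg z₂) hsK0
          calc |σ - σ'| * Real.sqrt α₂ * |z₂|
              = |σ - σ'| * (Real.sqrt α₂ * |z₂|) := by ring
            _ ≤ |σ - σ'| * (Real.sqrt K₂ * (phi z₁ * phi z₂)) :=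
                mul_le_mul_of_nonneg_left hx (abs_nonneg _)
            _ = |σ - σ'| * Real.sqrt K₂ * (phi z₁ * phi z₂) := by ring
        nlinarith [p1, p2]

lemma gmeV_diff {K₁ K₂ M L₁ U₁ α₂ R σ ξ γ σ' ξ' γ' y : ℝ}
    (hK₁ : 0 < K₁) (hL₁ : 0 < L₁)
    (hR : R ∈ Icc K₁ K₂) (hα₂ : α₂ ∈ Icc K₁ K₂)
    (hσ : σ ∈ Icc 0 M) (hξ : ξ ∈ Icc (-M) M) (hγ : γ ∈ Icc L₁ U₁)
    (hσ' : σ' ∈ Icc 0 M) (hξ' : ξ' ∈ Icc (-M) M) (hγ' : γ' ∈ Icc L₁ U₁)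
    (hy : |y| = 1) (z₁ z₂ : ℝ) :
    |gme γ y (Vfun α₂ R σ ξ z₁ z₂) - gme γ' y (Vfun α₂ R σ' ξ' z₁ z₂)|
      ≤ (K₂ * Real.sqrt K₂ + Real.sqrt K₂ + 1 / L₁ + (M ^ 2 * K₂ ^ 3 + M ^ 2 * K₂))
        * ((|σ - σ'| + |ξ - ξ'| + |γ - γ'|) * (phi z₁ * phi z₂)) := by
  have hγ0 : 0 ≤ γ := le_trans hL₁.le hγ.1
  have h1 : |gme γ y (Vfun α₂ R σ ξ z₁ z₂) - gme γ y (Vfun α₂ R σ' ξ' z₁ z₂)|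
      ≤ |Vfun α₂ R σ ξ z₁ z₂ - Vfun α₂ R σ' ξ' z₁ z₂| := gme_abs_lip hγ0 hy _ _
  have h2 := gme_gamma_lip hL₁ hγ hγ' (y := y) (v := Vfun α₂ R σ' ξ' z₁ z₂)
  have h3 := V_diff_bound (σ := σ) (ξ := ξ) (σ' := σ') (ξ' := ξ') hK₁ hR hα₂ z₁ z₂
  have h4 := Vsq_bound hK₁ hR hα₂ hσ' hξ' z₁ z₂
  have htr := abs_sub_le (gme γ y (Vfun α₂ R σ ξ z₁ z₂))
    (gme γ y (Vfun α₂ R σ' ξ' z₁ z₂)) (gme γ' y (Vfun α₂ R σ' ξ' z₁ z₂))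
  have hφ := one_le_phi_mul z₁ z₂
  have hlog := log_two_le_one
  have hlog0 : 0 ≤ Real.log 2 := Real.log_nonneg one_le_two
  have hK₂0 : 0 < K₂ := lt_of_lt_of_le hK₁ (le_trans hR.1 hR.2)
  have hsK0 : 0 ≤ Real.sqrt K₂ := Real.sqrt_nonneg _
  have hdγ : 0 ≤ |γ - γ'| := abs_nonneg _
  have hdσ : 0 ≤ |σ - σ'| := abs_nonneg _
  have hdξ : 0 ≤ |ξ - ξ'| := abs_nonneg _
  have hM2 : (0:ℝ) ≤ M ^ 2 * K₂ ^ 3 + M ^ 2 * K₂ := by positivity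
  -- bound the γ-part
  have h5 : |γ - γ'| * (Real.log 2 / L₁ + (Vfun α₂ R σ' ξ' z₁ z₂) ^ 2 / 2)
      ≤ |γ - γ'| * ((1 / L₁ + (M ^ 2 * K₂ ^ 3 + M ^ 2 * K₂)) * (phi z₁ * phi z₂)) := by
    apply mul_le_mul_of_nonneg_left _ hdγ
    have hl : Real.log 2 / L₁ ≤ 1 / L₁ * (phi z₁ * phi z₂) := by
      rw [div_eq_mul_inv, one_div]
      have : Real.log 2 * L₁⁻¹ ≤ 1 * L₁⁻¹ :=
        mul_le_mul_of_nonneg_right hlog (by positivity)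
      nlinarith [inv_nonneg.2 hL₁.le]
    nlinarith [h4]
  have hP0 : (0:ℝ) ≤ phi z₁ * phi z₂ := le_trans zero_le_one hφ
  have hcA : (0:ℝ) ≤ K₂ * Real.sqrt K₂ := by positivity
  have hinv : (0:ℝ) ≤ 1 / L₁ := by positivity
  nlinarith [h1, h2, h3, h5, htr,
    mul_nonneg (mul_nonneg hcA hdσ) hP0,
    mul_nonneg (mul_nonneg hcA hdγ) hP0,
    mul_nonneg (mul_nonneg hsK0 hdξ) hP0,
    mul_nonneg (mul_nonneg hsK0 hdγ) hP0,
    mul_nonneg (mul_nonneg hinv hdσ) hP0,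
    mul_nonneg (mul_nonneg hinv hdξ) hP0,
    mul_nonneg (mul_nonneg hM2 hdσ) hP0,
    mul_nonneg (mul_nonneg hM2 hdξ) hP0]

end Stmt17

namespace Stmt17

lemma Eexp_diff {K₁ K₂ M L₁ U₁ αc α₂ R σ ξ γ σ' ξ' γ' : ℝ}
    (hK₁ : 0 < K₁) (hM : 0 < M) (hL₁ : 0 < L₁)
    (hR : R ∈ Icc K₁ K₂) (hα₂ : α₂ ∈ Icc K₁ K₂)
    (hσ : σ ∈ Icc 0 M) (hξ : ξ ∈ Icc (-M) M) (hγ : γ ∈ Icc L₁ U₁)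
    (hσ' : σ' ∈ Icc 0 M) (hξ' : ξ' ∈ Icc (-M) M) (hγ' : γ' ∈ Icc L₁ U₁) :
    |Eexp αc α₂ R (fun z₁ z₂ y => gme γ y (Vfun α₂ R σ ξ z₁ z₂))
      - Eexp αc α₂ R (fun z₁ z₂ y => gme γ' y (Vfun α₂ R σ' ξ' z₁ z₂))|
      ≤ (2 * (K₂ * Real.sqrt K₂ + Real.sqrt K₂ + 1 / L₁ + (M ^ 2 * K₂ ^ 3 + M ^ 2 * K₂))
          * (∫ z, phi z ∂stdGauss) ^ 2)
        * (|σ - σ'| + |ξ - ξ'| + |γ - γ'|) := by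
  have hy1 : |(1:ℝ)| = 1 := abs_one
  have hym : |(-1:ℝ)| = 1 := by rw [abs_neg, abs_one]
  set J : ℝ := ∫ z, phi z ∂stdGauss with hJdef
  set cg : ℝ := 1 + U₁ * (M ^ 2 * K₂ ^ 3 + M ^ 2 * K₂) with hcgdef
  set cD : ℝ := K₂ * Real.sqrt K₂ + Real.sqrt K₂ + 1 / L₁ + (M ^ 2 * K₂ ^ 3 + M ^ 2 * K₂)
    with hcDdef
  set Δ : ℝ := |σ - σ'| + |ξ - ξ'| + |γ - γ'| with hΔdef
  have hK₂0 : 0 < K₂ := lt_of_lt_of_le hK₁ (le_trans hR.1 hR.2)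
  have hU0 : 0 ≤ U₁ := le_trans (le_trans hL₁.le hγ.1) hγ.2
  have hcg0 : 0 ≤ cg := by rw [hcgdef]; positivity
  have hcD0 : 0 ≤ cD := by rw [hcDdef]; positivity
  have hΔ0 : 0 ≤ Δ := by
    rw [hΔdef]; positivity
  have hJ1 : 1 ≤ J := by
    rw [hJdef]
    calc (1:ℝ) = ∫ _, (1:ℝ) ∂stdGauss := by simp
      _ ≤ ∫ z, phi z ∂stdGauss :=
          integral_mono (integrable_const 1) integrable_phi fun z => one_le_phi z
  have hJ0 : 0 ≤ J := le_trans zero_le_one hJ1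
  -- continuity of the integrand on the product space
  have hcont : ∀ γv (y σv ξv : ℝ), 0 ≤ γv → |y| = 1 →
      Continuous fun p : ℝ × ℝ => gme γv y (Vfun α₂ R σv ξv p.1 p.2) := by
    intro γv y σv ξv hγv hy
    exact (gme_cont hγv hy).comp (by unfold Vfun; fun_prop)
  -- inner integrability
  have hint1 : ∀ σv ξv γv, σv ∈ Icc 0 M → ξv ∈ Icc (-M) M → γv ∈ Icc L₁ U₁ →
      ∀ y : ℝ, |y| = 1 → ∀ z₁ : ℝ,
      Integrable (fun z₂ => gme γv y (Vfun α₂ R σv ξv z₁ z₂)) stdGauss := by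
    intro σv ξv γv hσv hξv hγv y hy z₁
    have hγv0 : 0 ≤ γv := le_trans hL₁.le hγv.1
    refine Integrable.mono' (integrable_phi.const_mul (cg * phi z₁)) ?_ ?_
    · exact ((gme_cont hγv0 hy).comp
        (show Continuous fun z₂ => Vfun α₂ R σv ξv z₁ z₂ by unfold Vfun; fun_prop)
        ).aestronglyMeasurable
    · refine Filter.Eventually.of_forall fun z₂ => ?_
      rw [Real.norm_eq_abs, abs_of_nonneg (gme_nonneg hγv0 _ _)]
      calc gme γv y (Vfun α₂ R σv ξv z₁ z₂) ≤ cg * (phi z₁ * phi z₂) :=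
            gmeV_bound hK₁ hL₁ hR hα₂ hσv hξv hγv z₁ z₂
        _ = cg * phi z₁ * phi z₂ := by ring
  -- measurability of inner integral
  have hBmeas : ∀ σv ξv γv (y : ℝ), 0 ≤ γv → |y| = 1 →
      StronglyMeasurable fun z₁ => ∫ z₂, gme γv y (Vfun α₂ R σv ξv z₁ z₂) ∂stdGauss := by
    intro σv ξv γv y hγv hy
    exact ((hcont γv y σv ξv hγv hy).stronglyMeasurable).integral_prod_right'
  -- bounds on inner integral
  have hB0 : ∀ σv ξv γv (y : ℝ), 0 ≤ γv → ∀ z₁,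
      0 ≤ ∫ z₂, gme γv y (Vfun α₂ R σv ξv z₁ z₂) ∂stdGauss := by
    intro σv ξv γv y hγv z₁
    exact integral_nonneg fun z₂ => gme_nonneg hγv _ _
  have hBle : ∀ σv ξv γv, σv ∈ Icc 0 M → ξv ∈ Icc (-M) M → γv ∈ Icc L₁ U₁ →
      ∀ y : ℝ, |y| = 1 → ∀ z₁,
      (∫ z₂, gme γv y (Vfun α₂ R σv ξv z₁ z₂) ∂stdGauss) ≤ cg * J * phi z₁ := by
    intro σv ξv γv hσv hξv hγv y hy z₁
    calc (∫ z₂, gme γv y (Vfun α₂ R σv ξv z₁ z₂) ∂stdGauss)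
        ≤ ∫ z₂, cg * phi z₁ * phi z₂ ∂stdGauss := by
          refine integral_mono (hint1 σv ξv γv hσv hξv hγv y hy z₁)
            (integrable_phi.const_mul _) fun z₂ => ?_
          calc gme γv y (Vfun α₂ R σv ξv z₁ z₂) ≤ cg * (phi z₁ * phi z₂) :=
                gmeV_bound hK₁ hL₁ hR hα₂ hσv hξv hγv z₁ z₂
            _ = cg * phi z₁ * phi z₂ := by ring
      _ = cg * phi z₁ * J := by rw [integral_const_mul _ _]
      _ = cg * J * phi z₁ := by ring
  -- integrability of inner integral
  have hBint : ∀ σv ξv γv, σv ∈ Icc 0 M → ξv ∈ Icc (-M) M → γv ∈ Icc L₁ U₁ →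
      ∀ y : ℝ, |y| = 1 →
      Integrable (fun z₁ => ∫ z₂, gme γv y (Vfun α₂ R σv ξv z₁ z₂) ∂stdGauss) stdGauss := by
    intro σv ξv γv hσv hξv hγv y hy
    have hγv0 : 0 ≤ γv := le_trans hL₁.le hγv.1
    refine Integrable.mono' (integrable_phi.const_mul (cg * J))
      (hBmeas σv ξv γv y hγv0 hy).aestronglyMeasurable ?_
    refine Filter.Eventually.of_forall fun z₁ => ?_
    rw [Real.norm_eq_abs, abs_of_nonneg (hB0 σv ξv γv y hγv0 z₁)]
    exact hBle σv ξv γv hσv hξv hγv y hy z₁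
  -- difference of inner integrals
  have hBdiff : ∀ y : ℝ, |y| = 1 → ∀ z₁,
      |(∫ z₂, gme γ y (Vfun α₂ R σ ξ z₁ z₂) ∂stdGauss)
        - ∫ z₂, gme γ' y (Vfun α₂ R σ' ξ' z₁ z₂) ∂stdGauss|
      ≤ cD * Δ * J * phi z₁ := by
    intro y hy z₁
    have ha := hint1 σ ξ γ hσ hξ hγ y hy z₁
    have hb := hint1 σ' ξ' γ' hσ' hξ' hγ' y hy z₁
    rw [← integral_sub ha hb]
    calc |∫ z₂, (gme γ y (Vfun α₂ R σ ξ z₁ z₂) - gme γ' y (Vfun α₂ R σ' ξ' z₁ z₂)) ∂stdGauss|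
        ≤ ∫ z₂, |gme γ y (Vfun α₂ R σ ξ z₁ z₂) - gme γ' y (Vfun α₂ R σ' ξ' z₁ z₂)| ∂stdGauss := by
          have := norm_integral_le_integral_norm (μ := stdGauss)
            (f := fun z₂ => gme γ y (Vfun α₂ R σ ξ z₁ z₂) - gme γ' y (Vfun α₂ R σ' ξ' z₁ z₂))
          simpa [Real.norm_eq_abs] using this
      _ ≤ ∫ z₂, cD * Δ * phi z₁ * phi z₂ ∂stdGauss := by
          refine integral_mono (ha.sub hb).abs (integrable_phi.const_mul _) fun z₂ => ?_
          calc |gme γ y (Vfun α₂ R σ ξ z₁ z₂) - gme γ' y (Vfun α₂ R σ' ξ' z₁ z₂)|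
              ≤ cD * (Δ * (phi z₁ * phi z₂)) :=
                gmeV_diff hK₁ hL₁ hR hα₂ hσ hξ hγ hσ' hξ' hγ' hy z₁ z₂
            _ = cD * Δ * phi z₁ * phi z₂ := by ring
      _ = cD * Δ * phi z₁ * J := by rw [integral_const_mul _ _]
      _ = cD * Δ * J * phi z₁ := by ring
  -- the A function and its expansion
  have hAeq : ∀ σv ξv γv, σv ∈ Icc 0 M → ξv ∈ Icc (-M) M → γv ∈ Icc L₁ U₁ → ∀ z₁ : ℝ,
      (∫ z₂, (qfun αc α₂ R z₁ * gme γv 1 (Vfun α₂ R σv ξv z₁ z₂)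
        + (1 - qfun αc α₂ R z₁) * gme γv (-1) (Vfun α₂ R σv ξv z₁ z₂)) ∂stdGauss)
      = qfun αc α₂ R z₁ * (∫ z₂, gme γv 1 (Vfun α₂ R σv ξv z₁ z₂) ∂stdGauss)
        + (1 - qfun αc α₂ R z₁) * ∫ z₂, gme γv (-1) (Vfun α₂ R σv ξv z₁ z₂) ∂stdGauss := by
    intro σv ξv γv hσv hξv hγv z₁
    rw [integral_add ((hint1 σv ξv γv hσv hξv hγv 1 hy1 z₁).const_mul _)
      ((hint1 σv ξv γv hσv hξv hγv (-1) hym z₁).const_mul _),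
      integral_const_mul _ _, integral_const_mul _ _]
  -- integrability of A
  have hAint : ∀ σv ξv γv, σv ∈ Icc 0 M → ξv ∈ Icc (-M) M → γv ∈ Icc L₁ U₁ →
      Integrable (fun z₁ => qfun αc α₂ R z₁
          * (∫ z₂, gme γv 1 (Vfun α₂ R σv ξv z₁ z₂) ∂stdGauss)
        + (1 - qfun αc α₂ R z₁)
          * ∫ z₂, gme γv (-1) (Vfun α₂ R σv ξv z₁ z₂) ∂stdGauss) stdGauss := by
    intro σv ξv γv hσv hξv hγv
    have hγv0 : 0 ≤ γv := le_trans hL₁.le hγv.1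
    refine Integrable.mono' (integrable_phi.const_mul (2 * (cg * J))) ?_ ?_
    · exact (((qfun_stronglyMeasurable αc α₂ R).mul (hBmeas σv ξv γv 1 hγv0 hy1)).add
        ((stronglyMeasurable_const.sub (qfun_stronglyMeasurable αc α₂ R)).mul
          (hBmeas σv ξv γv (-1) hγv0 hym))).aestronglyMeasurable
    · refine Filter.Eventually.of_forall fun z₁ => ?_
      rw [Real.norm_eq_abs]
      have hq0 := qfun_nonneg αc α₂ R z₁
      have hq1 := qfun_le_one αc α₂ R z₁
      have b1 := hB0 σv ξv γv 1 hγv0 z₁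
      have b2 := hB0 σv ξv γv (-1) hγv0 z₁
      have c1 := hBle σv ξv γv hσv hξv hγv 1 hy1 z₁
      have c2 := hBle σv ξv γv hσv hξv hγv (-1) hym z₁
      rw [abs_of_nonneg (by nlinarith)]
      nlinarith [mul_nonneg hq0 b1, mul_nonneg (by linarith : (0:ℝ) ≤ 1 - qfun αc α₂ R z₁) b2]
  -- main computation
  show |(∫ z₁, (∫ z₂, (qfun αc α₂ R z₁ * gme γ 1 (Vfun α₂ R σ ξ z₁ z₂)
        + (1 - qfun αc α₂ R z₁) * gme γ (-1) (Vfun α₂ R σ ξ z₁ z₂)) ∂stdGauss) ∂stdGauss)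
      - ∫ z₁, (∫ z₂, (qfun αc α₂ R z₁ * gme γ' 1 (Vfun α₂ R σ' ξ' z₁ z₂)
        + (1 - qfun αc α₂ R z₁) * gme γ' (-1) (Vfun α₂ R σ' ξ' z₁ z₂)) ∂stdGauss) ∂stdGauss|
      ≤ 2 * cD * J ^ 2 * Δ
  rw [integral_congr_ae (Filter.Eventually.of_forall (hAeq σ ξ γ hσ hξ hγ)),
    integral_congr_ae (Filter.Eventually.of_forall (hAeq σ' ξ' γ' hσ' hξ' hγ'))]
  rw [← integral_sub (hAint σ ξ γ hσ hξ hγ) (hAint σ' ξ' γ' hσ' hξ' hγ')]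
  have step1 : |∫ z₁, ((qfun αc α₂ R z₁
        * (∫ z₂, gme γ 1 (Vfun α₂ R σ ξ z₁ z₂) ∂stdGauss)
      + (1 - qfun αc α₂ R z₁) * ∫ z₂, gme γ (-1) (Vfun α₂ R σ ξ z₁ z₂) ∂stdGauss)
      - (qfun αc α₂ R z₁ * (∫ z₂, gme γ' 1 (Vfun α₂ R σ' ξ' z₁ z₂) ∂stdGauss)
      + (1 - qfun αc α₂ R z₁)
        * ∫ z₂, gme γ' (-1) (Vfun α₂ R σ' ξ' z₁ z₂) ∂stdGauss)) ∂stdGauss|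
      ≤ ∫ z₁, (2 * (cD * Δ * J)) * phi z₁ ∂stdGauss := by
    have habs := norm_integral_le_integral_norm (μ := stdGauss)
      (f := fun z₁ => (qfun αc α₂ R z₁
          * (∫ z₂, gme γ 1 (Vfun α₂ R σ ξ z₁ z₂) ∂stdGauss)
        + (1 - qfun αc α₂ R z₁) * ∫ z₂, gme γ (-1) (Vfun α₂ R σ ξ z₁ z₂) ∂stdGauss)
        - (qfun αc α₂ R z₁ * (∫ z₂, gme γ' 1 (Vfun α₂ R σ' ξ' z₁ z₂) ∂stdGauss)
        + (1 - qfun αc α₂ R z₁)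
          * ∫ z₂, gme γ' (-1) (Vfun α₂ R σ' ξ' z₁ z₂) ∂stdGauss))
    rw [Real.norm_eq_abs] at habs
    refine le_trans (by simpa [Real.norm_eq_abs] using habs) ?_
    refine integral_mono
      (((hAint σ ξ γ hσ hξ hγ).sub (hAint σ' ξ' γ' hσ' hξ' hγ')).abs)
      (integrable_phi.const_mul _) fun z₁ => ?_
    have hq0 := qfun_nonneg αc α₂ R z₁
    have hq1 := qfun_le_one αc α₂ R z₁
    have d1 := hBdiff 1 hy1 z₁
    have d2 := hBdiff (-1) hym z₁
    have e1 : |qfun αc α₂ R z₁ * ((∫ z₂, gme γ 1 (Vfun α₂ R σ ξ z₁ z₂) ∂stdGauss)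
        - ∫ z₂, gme γ' 1 (Vfun α₂ R σ' ξ' z₁ z₂) ∂stdGauss)|
        ≤ cD * Δ * J * phi z₁ := by
      rw [abs_mul, abs_of_nonneg hq0]
      calc qfun αc α₂ R z₁ * |(∫ z₂, gme γ 1 (Vfun α₂ R σ ξ z₁ z₂) ∂stdGauss)
          - ∫ z₂, gme γ' 1 (Vfun α₂ R σ' ξ' z₁ z₂) ∂stdGauss|
          ≤ 1 * (cD * Δ * J * phi z₁) :=
            mul_le_mul hq1 d1 (abs_nonneg _) zero_le_one
        _ = cD * Δ * J * phi z₁ := by ring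
    have e2 : |(1 - qfun αc α₂ R z₁) * ((∫ z₂, gme γ (-1) (Vfun α₂ R σ ξ z₁ z₂) ∂stdGauss)
        - ∫ z₂, gme γ' (-1) (Vfun α₂ R σ' ξ' z₁ z₂) ∂stdGauss)|
        ≤ cD * Δ * J * phi z₁ := by
      rw [abs_mul, abs_of_nonneg (by linarith : (0:ℝ) ≤ 1 - qfun αc α₂ R z₁)]
      calc (1 - qfun αc α₂ R z₁) * |(∫ z₂, gme γ (-1) (Vfun α₂ R σ ξ z₁ z₂) ∂stdGauss)
          - ∫ z₂, gme γ' (-1) (Vfun α₂ R σ' ξ' z₁ z₂) ∂stdGauss|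
          ≤ 1 * (cD * Δ * J * phi z₁) :=
            mul_le_mul (by linarith) d2 (abs_nonneg _) zero_le_one
        _ = cD * Δ * J * phi z₁ := by ring
    calc |(qfun αc α₂ R z₁ * (∫ z₂, gme γ 1 (Vfun α₂ R σ ξ z₁ z₂) ∂stdGauss)
          + (1 - qfun αc α₂ R z₁) * ∫ z₂, gme γ (-1) (Vfun α₂ R σ ξ z₁ z₂) ∂stdGauss)
        - (qfun αc α₂ R z₁ * (∫ z₂, gme γ' 1 (Vfun α₂ R σ' ξ' z₁ z₂) ∂stdGauss)
          + (1 - qfun αc α₂ R z₁) * ∫ z₂, gme γ' (-1) (Vfun α₂ R σ' ξ' z₁ z₂) ∂stdGauss)|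
        = |qfun αc α₂ R z₁ * ((∫ z₂, gme γ 1 (Vfun α₂ R σ ξ z₁ z₂) ∂stdGauss)
            - ∫ z₂, gme γ' 1 (Vfun α₂ R σ' ξ' z₁ z₂) ∂stdGauss)
          + (1 - qfun αc α₂ R z₁) * ((∫ z₂, gme γ (-1) (Vfun α₂ R σ ξ z₁ z₂) ∂stdGauss)
            - ∫ z₂, gme γ' (-1) (Vfun α₂ R σ' ξ' z₁ z₂) ∂stdGauss)| := by ring_nf
      _ ≤ _ := by
          refine le_trans (abs_add_le _ _) ?_
          calc _ ≤ (cD * Δ * J * phi z₁) + (cD * Δ * J * phi z₁) := add_le_add e1 e2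
            _ = (2 * (cD * Δ * J)) * phi z₁ := by ring
  refine le_trans step1 ?_
  rw [integral_const_mul _ _]
  have : (2 * (cD * Δ * J)) * J = 2 * cD * J ^ 2 * Δ := by ring
  rw [← hJdef] at *
  linarith [le_of_eq this]

end Stmt17

namespace Stmt17

lemma sq_diff_bound {a b M : ℝ} (ha : |a| ≤ M) (hb : |b| ≤ M) :
    |a ^ 2 - b ^ 2| ≤ 2 * M * |a - b| := by
  have e : a ^ 2 - b ^ 2 = (a + b) * (a - b) := by ring
  rw [e, abs_mul]
  have h1 : |a + b| ≤ 2 * M := le_trans (abs_add_le a b) (by linarith)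
  exact mul_le_mul_of_nonneg_right h1 (abs_nonneg _)

end Stmt17

set_option maxHeartbeats 2000000 in
/-- (Lemma 8(e)) The asymptotic loss `L` is `C`-Lipschitz (w.r.t. the
Euclidean norm) on `𝒞 = [0, M] × [−M, M] × [L₁, U₁]`. -/
theorem statement17 (K₁ K₂ M L₁ U₁ : ℝ) (hK₁ : 0 < K₁) (hK : K₁ ≤ K₂) (hM : 0 < M)
    (hL₁ : 0 < L₁) (hLU : L₁ ≤ U₁) :
    ∃ C : ℝ, 0 < C ∧
      ∀ lam δ R αc α₂ : ℝ, Assump1 K₁ K₂ δ R αc α₂ → lam ∈ Icc K₁ K₂ →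
      ∀ σ ξ γ σ' ξ' γ' : ℝ,
        σ ∈ Icc 0 M → ξ ∈ Icc (-M) M → γ ∈ Icc L₁ U₁ →
        σ' ∈ Icc 0 M → ξ' ∈ Icc (-M) M → γ' ∈ Icc L₁ U₁ →
        |Lasym lam δ αc α₂ R σ ξ γ - Lasym lam δ αc α₂ R σ' ξ' γ'|
          ≤ C * Real.sqrt ((σ - σ') ^ 2 + (ξ - ξ') ^ 2 + (γ - γ') ^ 2) := by
  have hK₂0 : 0 < K₂ := lt_of_lt_of_le hK₁ hK
  have hU₁0 : 0 < U₁ := lt_of_lt_of_le hL₁ hLU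
  have hJ1 : 1 ≤ ∫ z, Stmt17.phi z ∂stdGauss := by
    calc (1:ℝ) = ∫ _, (1:ℝ) ∂stdGauss := by simp
      _ ≤ ∫ z, Stmt17.phi z ∂stdGauss :=
          integral_mono (integrable_const 1) Stmt17.integrable_phi fun z => Stmt17.one_le_phi z
  have hJ0 : 0 ≤ ∫ z, Stmt17.phi z ∂stdGauss := le_trans zero_le_one hJ1
  set cT : ℝ := K₂ * M + K₂ ^ 3 * M with hcT
  set cQ : ℝ := K₂ / (2 * K₁) * M ^ 2 + K₂ / (2 * K₁) * (2 * M * U₁) with hcQ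
  set cE : ℝ := 2 * (K₂ * Real.sqrt K₂ + Real.sqrt K₂ + 1 / L₁ + (M ^ 2 * K₂ ^ 3 + M ^ 2 * K₂))
      * (∫ z, Stmt17.phi z ∂stdGauss) ^ 2 with hcE
  have hcT0 : 0 ≤ cT := by rw [hcT]; positivity
  have hcQ0 : 0 ≤ cQ := by rw [hcQ]; positivity
  have hcE0 : 0 ≤ cE := by rw [hcE]; positivity
  refine ⟨3 * (cT + cQ + cE) + 1, by positivity, ?_⟩
  intro lam δ R αc α₂ hA hlam σ ξ γ σ' ξ' γ' hσ hξ hγ hσ' hξ' hγ'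
  obtain ⟨-, -, hδ, hR, hαc, hα₂, -⟩ := hA
  have hlam0 : 0 < lam := lt_of_lt_of_le hK₁ hlam.1
  have hδ0 : 0 < δ := lt_of_lt_of_le hK₁ hδ.1
  have hα₂0 : 0 < α₂ := lt_of_lt_of_le hK₁ hα₂.1
  set Δ : ℝ := |σ - σ'| + |ξ - ξ'| + |γ - γ'| with hΔ
  have hΔ0 : 0 ≤ Δ := by rw [hΔ]; positivity
  have hsplit : ∀ σv ξv γv : ℝ, Lasym lam δ αc α₂ R σv ξv γv
      = lam * (σv ^ 2 + ξv ^ 2 * R ^ 2) / 2 - α₂ * γv * σv ^ 2 / (2 * δ)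
        + Eexp αc α₂ R (fun z₁ z₂ y => Stmt17.gme γv y (Vfun α₂ R σv ξv z₁ z₂)) :=
    fun _ _ _ => rfl
  -- bounds on |σ|, |ξ|
  have haσ : |σ| ≤ M := abs_le.mpr ⟨by linarith [hσ.1], hσ.2⟩
  have haσ' : |σ'| ≤ M := abs_le.mpr ⟨by linarith [hσ'.1], hσ'.2⟩
  have haξ : |ξ| ≤ M := abs_le.mpr ⟨hξ.1, hξ.2⟩
  have haξ' : |ξ'| ≤ M := abs_le.mpr ⟨hξ'.1, hξ'.2⟩
  have hsd := Stmt17.sq_diff_bound haσ haσ'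
  have hxd := Stmt17.sq_diff_bound haξ haξ'
  -- T part
  have hT : |lam * (σ ^ 2 + ξ ^ 2 * R ^ 2) / 2 - lam * (σ' ^ 2 + ξ' ^ 2 * R ^ 2) / 2|
      ≤ cT * Δ := by
    have e : lam * (σ ^ 2 + ξ ^ 2 * R ^ 2) / 2 - lam * (σ' ^ 2 + ξ' ^ 2 * R ^ 2) / 2
        = lam / 2 * (σ ^ 2 - σ' ^ 2) + lam * R ^ 2 / 2 * (ξ ^ 2 - ξ' ^ 2) := by ring
    rw [e]
    have hR2 : R ^ 2 ≤ K₂ ^ 2 := by nlinarith only [hR.1, hR.2, hK₁]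
    calc |lam / 2 * (σ ^ 2 - σ' ^ 2) + lam * R ^ 2 / 2 * (ξ ^ 2 - ξ' ^ 2)|
        ≤ |lam / 2 * (σ ^ 2 - σ' ^ 2)| + |lam * R ^ 2 / 2 * (ξ ^ 2 - ξ' ^ 2)| := abs_add_le _ _
      _ = lam / 2 * |σ ^ 2 - σ' ^ 2| + lam * R ^ 2 / 2 * |ξ ^ 2 - ξ' ^ 2| := by
          rw [abs_mul, abs_mul, abs_of_nonneg (by positivity : (0:ℝ) ≤ lam / 2),
            abs_of_nonneg (by positivity : (0:ℝ) ≤ lam * R ^ 2 / 2)]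
      _ ≤ K₂ / 2 * (2 * M * |σ - σ'|) + K₂ * K₂ ^ 2 / 2 * (2 * M * |ξ - ξ'|) := by
          have b1 : lam / 2 * |σ ^ 2 - σ' ^ 2| ≤ K₂ / 2 * (2 * M * |σ - σ'|) :=
            mul_le_mul (by linarith [hlam.2]) hsd (abs_nonneg _)
              (div_nonneg hK₂0.le (by norm_num))
          have b2 : lam * R ^ 2 / 2 * |ξ ^ 2 - ξ' ^ 2|
              ≤ K₂ * K₂ ^ 2 / 2 * (2 * M * |ξ - ξ'|) := by
            refine mul_le_mul ?_ hxd (abs_nonneg _)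
              (div_nonneg (mul_nonneg hK₂0.le (sq_nonneg K₂)) (by norm_num))
            nlinarith only [hlam.2, sq_nonneg R, hlam0.le, hR2, hK₂0]
          exact add_le_add b1 b2
      _ = K₂ * M * |σ - σ'| + K₂ ^ 3 * M * |ξ - ξ'| := by ring
      _ ≤ cT * Δ := by
          rw [hcT, hΔ]
          have q1 : (0:ℝ) ≤ K₂ * M := mul_nonneg hK₂0.le hM.le
          have q2 : (0:ℝ) ≤ K₂ ^ 3 * M := mul_nonneg (by positivity) hM.le
          have r1 : K₂ * M * |σ - σ'| ≤ (K₂ * M + K₂ ^ 3 * M) * |σ - σ'| :=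
            mul_le_mul_of_nonneg_right (by linarith) (abs_nonneg _)
          have r2 : K₂ ^ 3 * M * |ξ - ξ'| ≤ (K₂ * M + K₂ ^ 3 * M) * |ξ - ξ'| :=
            mul_le_mul_of_nonneg_right (by linarith) (abs_nonneg _)
          have r3 : (0:ℝ) ≤ (K₂ * M + K₂ ^ 3 * M) * |γ - γ'| :=
            mul_nonneg (by linarith) (abs_nonneg _)
          linarith only [r1, r2, r3]
  -- Q part
  have hQ : |α₂ * γ * σ ^ 2 / (2 * δ) - α₂ * γ' * σ' ^ 2 / (2 * δ)| ≤ cQ * Δ := by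
    have e : α₂ * γ * σ ^ 2 / (2 * δ) - α₂ * γ' * σ' ^ 2 / (2 * δ)
        = α₂ / (2 * δ) * ((γ - γ') * σ ^ 2) + α₂ / (2 * δ) * (γ' * (σ ^ 2 - σ' ^ 2)) := by
      ring
    rw [e]
    have hfrac : α₂ / (2 * δ) ≤ K₂ / (2 * K₁) :=
      div_le_div₀ hK₂0.le hα₂.2 (by linarith) (by linarith [hδ.1])
    have hfrac0 : (0:ℝ) ≤ α₂ / (2 * δ) := by positivity
    have hγ'0 : 0 ≤ γ' := le_trans hL₁.le hγ'.1
    have hσ2 : σ ^ 2 ≤ M ^ 2 := by nlinarith only [hσ.1, hσ.2]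
    calc |α₂ / (2 * δ) * ((γ - γ') * σ ^ 2) + α₂ / (2 * δ) * (γ' * (σ ^ 2 - σ' ^ 2))|
        ≤ |α₂ / (2 * δ) * ((γ - γ') * σ ^ 2)| + |α₂ / (2 * δ) * (γ' * (σ ^ 2 - σ' ^ 2))| :=
          abs_add_le _ _
      _ = α₂ / (2 * δ) * (|γ - γ'| * σ ^ 2) + α₂ / (2 * δ) * (γ' * |σ ^ 2 - σ' ^ 2|) := by
          rw [abs_mul, abs_mul, abs_mul, abs_mul, abs_of_nonneg hfrac0,
            abs_of_nonneg (sq_nonneg σ), abs_of_nonneg hγ'0]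
      _ ≤ K₂ / (2 * K₁) * (M ^ 2 * |γ - γ'|) + K₂ / (2 * K₁) * (U₁ * (2 * M * |σ - σ'|)) := by
          have hc0 : (0:ℝ) ≤ K₂ / (2 * K₁) := div_nonneg hK₂0.le (by linarith)
          have b1 : α₂ / (2 * δ) * (|γ - γ'| * σ ^ 2)
              ≤ K₂ / (2 * K₁) * (M ^ 2 * |γ - γ'|) := by
            refine mul_le_mul hfrac ?_ (mul_nonneg (abs_nonneg _) (sq_nonneg _)) hc0
            calc |γ - γ'| * σ ^ 2 ≤ |γ - γ'| * M ^ 2 :=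
                  mul_le_mul_of_nonneg_left hσ2 (abs_nonneg _)
              _ = M ^ 2 * |γ - γ'| := by ring
          have b2 : α₂ / (2 * δ) * (γ' * |σ ^ 2 - σ' ^ 2|)
              ≤ K₂ / (2 * K₁) * (U₁ * (2 * M * |σ - σ'|)) :=
            mul_le_mul hfrac (mul_le_mul hγ'.2 hsd (abs_nonneg _) hU₁0.le)
              (mul_nonneg hγ'0 (abs_nonneg _)) hc0
          exact add_le_add b1 b2
      _ = K₂ / (2 * K₁) * M ^ 2 * |γ - γ'| + K₂ / (2 * K₁) * (2 * M * U₁) * |σ - σ'| := by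
          ring
      _ ≤ cQ * Δ := by
          rw [hcQ, hΔ]
          have hc0 : (0:ℝ) ≤ K₂ / (2 * K₁) := div_nonneg hK₂0.le (by linarith)
          have q1 : (0:ℝ) ≤ K₂ / (2 * K₁) * M ^ 2 := mul_nonneg hc0 (sq_nonneg M)
          have q2 : (0:ℝ) ≤ K₂ / (2 * K₁) * (2 * M * U₁) :=
            mul_nonneg hc0 (by positivity)
          have r1 : K₂ / (2 * K₁) * M ^ 2 * |γ - γ'|
              ≤ (K₂ / (2 * K₁) * M ^ 2 + K₂ / (2 * K₁) * (2 * M * U₁)) * |γ - γ'| :=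
            mul_le_mul_of_nonneg_right (by linarith) (abs_nonneg _)
          have r2 : K₂ / (2 * K₁) * (2 * M * U₁) * |σ - σ'|
              ≤ (K₂ / (2 * K₁) * M ^ 2 + K₂ / (2 * K₁) * (2 * M * U₁)) * |σ - σ'| :=
            mul_le_mul_of_nonneg_right (by linarith) (abs_nonneg _)
          have r3 : (0:ℝ) ≤ (K₂ / (2 * K₁) * M ^ 2 + K₂ / (2 * K₁) * (2 * M * U₁)) * |ξ - ξ'| :=
            mul_nonneg (by linarith) (abs_nonneg _)
          linarith only [r1, r2, r3]
  -- E part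
  have hE := Stmt17.Eexp_diff (U₁ := U₁) hK₁ hM hL₁ hR hα₂ hσ hξ hγ hσ' hξ' hγ'
    (αc := αc)
  rw [← hcE, ← hΔ] at hE
  -- combine
  rw [hsplit σ ξ γ, hsplit σ' ξ' γ']
  set E1 : ℝ := Eexp αc α₂ R (fun z₁ z₂ y => Stmt17.gme γ y (Vfun α₂ R σ ξ z₁ z₂)) with hE1d
  set E2 : ℝ := Eexp αc α₂ R (fun z₁ z₂ y => Stmt17.gme γ' y (Vfun α₂ R σ' ξ' z₁ z₂)) with hE2d
  have habs : |(lam * (σ ^ 2 + ξ ^ 2 * R ^ 2) / 2 - α₂ * γ * σ ^ 2 / (2 * δ) + E1)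
      - (lam * (σ' ^ 2 + ξ' ^ 2 * R ^ 2) / 2 - α₂ * γ' * σ' ^ 2 / (2 * δ) + E2)|
      ≤ (cT + cQ + cE) * Δ := by
    have e : (lam * (σ ^ 2 + ξ ^ 2 * R ^ 2) / 2 - α₂ * γ * σ ^ 2 / (2 * δ) + E1)
      - (lam * (σ' ^ 2 + ξ' ^ 2 * R ^ 2) / 2 - α₂ * γ' * σ' ^ 2 / (2 * δ) + E2)
      = (lam * (σ ^ 2 + ξ ^ 2 * R ^ 2) / 2 - lam * (σ' ^ 2 + ξ' ^ 2 * R ^ 2) / 2)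
        + (-(α₂ * γ * σ ^ 2 / (2 * δ) - α₂ * γ' * σ' ^ 2 / (2 * δ)))
        + (E1 - E2) := by ring
    rw [e]
    have t1 := abs_add_le ((lam * (σ ^ 2 + ξ ^ 2 * R ^ 2) / 2
        - lam * (σ' ^ 2 + ξ' ^ 2 * R ^ 2) / 2)
      + (-(α₂ * γ * σ ^ 2 / (2 * δ) - α₂ * γ' * σ' ^ 2 / (2 * δ)))) (E1 - E2)
    have t2 := abs_add_le (lam * (σ ^ 2 + ξ ^ 2 * R ^ 2) / 2
        - lam * (σ' ^ 2 + ξ' ^ 2 * R ^ 2) / 2)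
      (-(α₂ * γ * σ ^ 2 / (2 * δ) - α₂ * γ' * σ' ^ 2 / (2 * δ)))
    rw [abs_neg] at t2
    have hEd : |E1 - E2| ≤ cE * Δ := hE
    refine le_trans t1 (le_trans (add_le_add t2 le_rfl) ?_)
    refine le_trans (add_le_add (add_le_add hT hQ) hEd) (le_of_eq (by ring))
  refine le_trans habs ?_
  -- Δ ≤ 3 * sqrt S
  set S : ℝ := (σ - σ') ^ 2 + (ξ - ξ') ^ 2 + (γ - γ') ^ 2 with hS
  have hsq : ∀ a : ℝ, a ^ 2 ≤ S → |a| ≤ Real.sqrt S := by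
    intro a ha
    rw [← Real.sqrt_sq_eq_abs]
    exact Real.sqrt_le_sqrt ha
  have h1 := hsq (σ - σ') (by rw [hS]; nlinarith only [sq_nonneg (ξ - ξ'), sq_nonneg (γ - γ')])
  have h2 := hsq (ξ - ξ') (by rw [hS]; nlinarith only [sq_nonneg (σ - σ'), sq_nonneg (γ - γ')])
  have h3 := hsq (γ - γ') (by rw [hS]; nlinarith only [sq_nonneg (σ - σ'), sq_nonneg (ξ - ξ')])
  have hΔ3 : Δ ≤ 3 * Real.sqrt S := by rw [hΔ]; linarith only [h1, h2, h3]
  have hs0 : 0 ≤ Real.sqrt S := Real.sqrt_nonneg _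
  calc (cT + cQ + cE) * Δ ≤ (cT + cQ + cE) * (3 * Real.sqrt S) :=
        mul_le_mul_of_nonneg_left hΔ3 (by positivity)
    _ ≤ (3 * (cT + cQ + cE) + 1) * Real.sqrt S := by nlinarith only [hs0, hcT0, hcQ0, hcE0]


end
end

section
/- Let ρ(t) = log(1 + e^t). For every M > 0 there exists a constant γ̲_M > 0 such that for all x ∈ ℝ with |x| ≤ M and all γ ∈ (0, γ̲_M]: (a) the unique minimizer prox⁺_ρ(x; γ) of the function u ↦ ρ(u) + (γ/2)(u − x)² over u ∈ ℝ satisfies prox⁺_ρ(x; γ) ≤ (1/4)·log γ; and (b) the unique minimizer prox⁻_ρ(x; γ) of the function u ↦ ρ(−u) + (γ/2)(u − x)² over u ∈ ℝ satisfies prox⁻_ρ(x; γ) ≥ (1/4)·log(1/γ). -/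
open Set

noncomputable section

/-- Tangent line inequality for the convex function `rho`:
`rho t + σ(t) (u - t) ≤ rho u` where `σ(t) = eᵗ/(1+eᵗ)`. -/
lemma rho_tangent (t u : ℝ) :
    rho t + (Real.exp t / (1 + Real.exp t)) * (u - t) ≤ rho u := by
  have het : (0:ℝ) < Real.exp t := Real.exp_pos t
  have heu : (0:ℝ) < Real.exp u := Real.exp_pos u
  have h1t : (0:ℝ) < 1 + Real.exp t := by linarith
  have h1u : (0:ℝ) < 1 + Real.exp u := by linarith
  set σ : ℝ := Real.exp t / (1 + Real.exp t) with hσdef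
  have hσ0 : (0:ℝ) ≤ σ := by positivity
  have hσ1 : (0:ℝ) ≤ 1 - σ := by
    have : σ ≤ 1 := by
      rw [hσdef, div_le_one h1t]; linarith
    linarith
  -- convexity of exp at points u, t with weights σ, 1-σ
  have hconv := convexOn_exp.2 (Set.mem_univ u) (Set.mem_univ t) hσ0 hσ1 (by ring)
  simp only [smul_eq_mul] at hconv
  -- exp (σ*u + (1-σ)*t) ≤ σ * exp u + (1-σ) * exp t
  have hkey : Real.exp (σ * (u - t)) ≤ (1 + Real.exp u) / (1 + Real.exp t) := by
    have hexp : Real.exp (σ * u + (1 - σ) * t) = Real.exp t * Real.exp (σ * (u - t)) := by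
      rw [← Real.exp_add]; ring_nf
    have hrhs : σ * Real.exp u + (1 - σ) * Real.exp t
        = Real.exp t * ((1 + Real.exp u) / (1 + Real.exp t)) := by
      rw [hσdef]; field_simp; ring
    rw [hexp, hrhs] at hconv
    exact (mul_le_mul_iff_right₀ het).mp hconv
  have hlog := Real.log_le_log (Real.exp_pos _) hkey
  rw [Real.log_exp, Real.log_div (by positivity) (by positivity)] at hlog
  unfold rho
  linarith

/-- For every `M > 0` there is `γ̲_M > 0` such that for `|x| ≤ M` and
`0 < γ ≤ γ̲_M`, the minimizer of `u ↦ ρ(u) + (γ/2)(u − x)²` is `≤ (1/4) log γ` and the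
minimizer of `u ↦ ρ(−u) + (γ/2)(u − x)²` is `≥ (1/4) log(1/γ)`. -/
theorem statement19 (M : ℝ) (hM : 0 < M) :
    ∃ γM : ℝ, 0 < γM ∧
      ∀ x : ℝ, |x| ≤ M → ∀ γ : ℝ, 0 < γ → γ ≤ γM →
        (∀ u : ℝ,
          (∀ v : ℝ, rho u + γ / 2 * (u - x) ^ 2 ≤ rho v + γ / 2 * (v - x) ^ 2) →
          u ≤ 1 / 4 * Real.log γ) ∧
        (∀ u : ℝ,
          (∀ v : ℝ, rho (-u) + γ / 2 * (u - x) ^ 2 ≤ rho (-v) + γ / 2 * (v - x) ^ 2) →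
          1 / 4 * Real.log (1 / γ) ≤ u) := by
  refine ⟨(1 / (4 + 8 * M)) ^ 4, by positivity, ?_⟩
  intro x hx γ hγ hγle
  obtain ⟨hxle, hxge⟩ : x ≤ M ∧ -M ≤ x := ⟨le_of_abs_le hx, neg_le_of_abs_le hx⟩
  obtain ⟨a, ha⟩ : ∃ a : ℝ, a = 1 / 4 * Real.log γ := ⟨_, rfl⟩
  obtain ⟨s, hs⟩ : ∃ s : ℝ, s = Real.exp a := ⟨_, rfl⟩
  have hs0 : (0:ℝ) < s := hs ▸ Real.exp_pos a
  have hs4 : s ^ 4 = γ := by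
    rw [hs, ← Real.exp_nat_mul, ha]
    have : (4:ℕ) * (1 / 4 * Real.log γ) = Real.log γ := by push_cast; ring
    rw [this, Real.exp_log hγ]
  have hc0 : (0:ℝ) < 1 / (4 + 8 * M) := by positivity
  have hsc : s ≤ 1 / (4 + 8 * M) := by
    refine le_of_pow_le_pow_left₀ (n := 4) (by norm_num) (le_of_lt hc0) ?_
    rw [hs4]; exact hγle
  have hs1 : s ≤ 1 := by
    refine hsc.trans ?_
    rw [div_le_one (by linarith)]; linarith
  have hloga : Real.log s = a := by rw [hs, Real.log_exp]
  have hlogs : -a ≤ 1 / s := by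
    have := Real.log_le_sub_one_of_pos (show (0:ℝ) < 1/s by positivity)
    rw [Real.log_div one_ne_zero (ne_of_gt hs0), Real.log_one, hloga] at this
    linarith
  have ha0 : a ≤ 0 := by
    rw [← hloga]; exact Real.log_nonpos (le_of_lt hs0) hs1
  -- key quantitative bound : γ * (2M − 2a) < s/2
  have hkey : γ * (2 * M - 2 * a) < s / 2 := by
    have h1 : γ * (2 * M) = 2 * M * s * s ^ 3 := by rw [← hs4]; ring
    have h2 : γ * (-2 * a) ≤ 2 * s ^ 3 := by
      have hh : s ^ 4 * (-a) ≤ s ^ 4 * (1 / s) :=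
        mul_le_mul_of_nonneg_left hlogs (by positivity)
      have h3 : s ^ 4 * (1 / s) = s ^ 3 := by field_simp
      rw [← hs4]; nlinarith
    have hs3 : s ^ 3 ≤ s * 1 := by nlinarith [sq_nonneg s, sq_nonneg (s - 1)]
    have hMs : 2 * M * s * s ^ 3 ≤ 2 * M * s * s := by
      nlinarith [mul_le_mul_of_nonneg_left hs3 (show (0:ℝ) ≤ 2 * M * s by positivity)]
    have hprod : s * (4 + 8 * M) * s ≤ s * (4 + 8 * M) * (1 / (4 + 8 * M)) :=
      mul_le_mul_of_nonneg_left hsc (by positivity)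
    have hsimp : s * (4 + 8 * M) * (1 / (4 + 8 * M)) = s := by field_simp
    nlinarith
  have hσ2 : s / 2 ≤ s / (1 + s) := by
    rw [div_le_div_iff₀ (by norm_num) (by linarith)]
    nlinarith
  have hexpa : Real.exp a / (1 + Real.exp a) = s / (1 + s) := by rw [hs]
  constructor
  · intro u hu
    rw [← ha]
    by_contra hcon
    push_neg at hcon
    have hua : 0 < u - a := by linarith
    have htan := rho_tangent a u
    rw [hexpa] at htan
    have hmin := hu a
    have hq : (a - x) ^ 2 - (u - x) ^ 2 ≤ (u - a) * (2 * M - 2 * a) := by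
      have hmul : (u - a) * (2 * x - a - u) ≤ (u - a) * (2 * M - 2 * a) :=
        mul_le_mul_of_nonneg_left (by linarith) (le_of_lt hua)
      have hid : (a - x) ^ 2 - (u - x) ^ 2 = (u - a) * (2 * x - a - u) := by ring
      linarith
    have h3 : γ / 2 * ((a - x) ^ 2 - (u - x) ^ 2)
        ≤ γ / 2 * ((u - a) * (2 * M - 2 * a)) :=
      mul_le_mul_of_nonneg_left hq (by positivity)
    have hdist : γ / 2 * ((a - x) ^ 2 - (u - x) ^ 2)
        = γ / 2 * (a - x) ^ 2 - γ / 2 * (u - x) ^ 2 := by ring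
    have h2 : s / (1 + s) * (u - a) ≤ γ / 2 * ((u - a) * (2 * M - 2 * a)) := by
      linarith
    have h1 : s / 2 * (u - a) ≤ s / (1 + s) * (u - a) :=
      mul_le_mul_of_nonneg_right hσ2 (le_of_lt hua)
    have hk := mul_lt_mul_of_pos_right hkey hua
    have he1 : γ / 2 * ((u - a) * (2 * M - 2 * a))
        = γ * (2 * M - 2 * a) * (u - a) / 2 := by ring
    have he2 : s / 2 * (u - a) = s * (u - a) / 2 := by ring
    have hpos : 0 < s * (u - a) := mul_pos hs0 hua
    linarith
  · intro u hu
    have hb : 1 / 4 * Real.log (1 / γ) = -a := by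
      rw [Real.log_div one_ne_zero (ne_of_gt hγ), Real.log_one, ha]; ring
    rw [hb]
    by_contra hcon
    push_neg at hcon
    have hua : 0 < -a - u := by linarith
    have htan := rho_tangent a (-u)
    rw [hexpa] at htan
    have hmin := hu (-a)
    rw [neg_neg] at hmin
    have hq : (-a - x) ^ 2 - (u - x) ^ 2 ≤ (-a - u) * (2 * M - 2 * a) := by
      have hmul : (-a - u) * (-a + u - 2 * x) ≤ (-a - u) * (2 * M - 2 * a) :=
        mul_le_mul_of_nonneg_left (by linarith) (le_of_lt hua)
      have hid : (-a - x) ^ 2 - (u - x) ^ 2 = (-a - u) * (-a + u - 2 * x) := by ring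
      linarith
    have h3 : γ / 2 * ((-a - x) ^ 2 - (u - x) ^ 2)
        ≤ γ / 2 * ((-a - u) * (2 * M - 2 * a)) :=
      mul_le_mul_of_nonneg_left hq (by positivity)
    have hdist : γ / 2 * ((-a - x) ^ 2 - (u - x) ^ 2)
        = γ / 2 * (-a - x) ^ 2 - γ / 2 * (u - x) ^ 2 := by ring
    have htan' : s / (1 + s) * (-a - u) ≤ rho (-u) - rho a := by
      have : s / (1 + s) * (-u - a) = s / (1 + s) * (-a - u) := by ring
      linarith [htan, this.symm.le]
    have h2 : s / (1 + s) * (-a - u) ≤ γ / 2 * ((-a - u) * (2 * M - 2 * a)) := by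
      linarith
    have h1 : s / 2 * (-a - u) ≤ s / (1 + s) * (-a - u) :=
      mul_le_mul_of_nonneg_right hσ2 (le_of_lt hua)
    have hk := mul_lt_mul_of_pos_right hkey hua
    have he1 : γ / 2 * ((-a - u) * (2 * M - 2 * a))
        = γ * (2 * M - 2 * a) * (-a - u) / 2 := by ring
    have he2 : s / 2 * (-a - u) = s * (-a - u) / 2 := by ring
    have hpos : 0 < s * (-a - u) := mul_pos hs0 hua
    linarith

end
end
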